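/- Let N ≅ E_8 ⊕ D_4 ⊕ U(2) and T ≅ N ⊕ U. For any rank 2 primitive isotropic sublattice E of T, there exists a basis {b_1, b_2} of E and an isometry φ: T → U ⊕ N such that φ(b_1) ∈ U and φ(b_2) ∈ N. -/

import Mathlib

open Matrix BigOperators

/-- The Gram matrix of the negative definite root lattice attached to a
simply-laced Dynkin diagram with the given edge list: diagonal entries `-2`,
entries `1` for joined nodes, `0` otherwise. -/
def dynGram {n : ℕ} (edges : List (Fin n × Fin n)) : Matrix (Fin n) (Fin n) ℤ :=
  fun i j => if i = j then -2 else if (i, j) ∈ edges ∨ (j, i) ∈ edges then 1 else 0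

/-- The `D₄` root lattice (nodes `0, 2, 3` attached to the center `1`). -/
def D4gram : Matrix (Fin 4) (Fin 4) ℤ := dynGram [(1,0), (1,2), (1,3)]

/-- The `E₈` root lattice: arms of lengths `1`, `2` and `4` attached to the
central node `0`. -/
def E8gram : Matrix (Fin 8) (Fin 8) ℤ :=
  dynGram [(0,1), (0,2), (2,3), (0,4), (4,5), (5,6), (6,7)]

/-- The `D₁₂` root lattice: a chain `0 — 1 — ⋯ — 9` with the two extra nodes
`10` and `11` attached to node `9`. -/
def D12gram : Matrix (Fin 12) (Fin 12) ℤ :=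
  dynGram [(0,1),(1,2),(2,3),(3,4),(4,5),(5,6),(6,7),(7,8),(8,9),(9,10),(9,11)]

/-- The Gram matrix of `D₄ ⊕ E₈`. -/
def D4E8gram : Matrix (Fin 12) (Fin 12) ℤ :=
  Matrix.reindex finSumFinEquiv finSumFinEquiv (Matrix.fromBlocks D4gram 0 0 E8gram)

/-- The hyperbolic plane `U` with Gram matrix `[[0,1],[1,0]]`. -/
def Ugram : Matrix (Fin 2) (Fin 2) ℤ := !![0, 1; 1, 0]

/-- The lattice `U(2)` with Gram matrix `[[0,2],[2,0]]`. -/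
def U2gram : Matrix (Fin 2) (Fin 2) ℤ := !![0, 2; 2, 0]

/-- The Gram matrix of `N = D₄ ⊕ E₈ ⊕ U(2)` (rank 14). -/
def Ngram : Matrix (Fin 14) (Fin 14) ℤ :=
  Matrix.reindex finSumFinEquiv finSumFinEquiv (Matrix.fromBlocks D4E8gram 0 0 U2gram)

/-- The Gram matrix of `T = U ⊕ N`: the hyperbolic plane `U` on the first two
coordinates, `N = D₄ ⊕ E₈ ⊕ U(2)` on the remaining fourteen. -/
def Tgram : Matrix (Fin 16) (Fin 16) ℤ :=
  Matrix.reindex finSumFinEquiv finSumFinEquiv (Matrix.fromBlocks Ugram 0 0 Ngram)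

/-- The bilinear form of `T`. -/
def bT (x y : Fin 16 → ℤ) : ℤ := x ⬝ᵥ (Tgram.mulVec y)


section Framework
abbrev V16 := Fin 16 → ℤ

lemma sum16 {M : Type*} [AddCommMonoid M] (f : Fin 16 → M) : (∑ i, f i) =
    f 0 + (f 1 + (f 2 + (f 3 + (f 4 + (f 5 + (f 6 + (f 7 + (f 8 + (f 9 +
    (f 10 + (f 11 + (f 12 + (f 13 + (f 14 + f 15)))))))))))))) := by
  simp [Fin.sum_univ_succ]

def Gmat : Matrix (Fin 16) (Fin 16) ℤ :=
  !![0, 1, 0, 0, 0, 0, 0, 0, 0, 0, 0, 0, 0, 0, 0, 0;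
    1, 0, 0, 0, 0, 0, 0, 0, 0, 0, 0, 0, 0, 0, 0, 0;
    0, 0, -2, 1, 0, 0, 0, 0, 0, 0, 0, 0, 0, 0, 0, 0;
    0, 0, 1, -2, 1, 1, 0, 0, 0, 0, 0, 0, 0, 0, 0, 0;
    0, 0, 0, 1, -2, 0, 0, 0, 0, 0, 0, 0, 0, 0, 0, 0;
    0, 0, 0, 1, 0, -2, 0, 0, 0, 0, 0, 0, 0, 0, 0, 0;
    0, 0, 0, 0, 0, 0, -2, 1, 1, 0, 1, 0, 0, 0, 0, 0;
    0, 0, 0, 0, 0, 0, 1, -2, 0, 0, 0, 0, 0, 0, 0, 0;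
    0, 0, 0, 0, 0, 0, 1, 0, -2, 1, 0, 0, 0, 0, 0, 0;
    0, 0, 0, 0, 0, 0, 0, 0, 1, -2, 0, 0, 0, 0, 0, 0;
    0, 0, 0, 0, 0, 0, 1, 0, 0, 0, -2, 1, 0, 0, 0, 0;
    0, 0, 0, 0, 0, 0, 0, 0, 0, 0, 1, -2, 1, 0, 0, 0;
    0, 0, 0, 0, 0, 0, 0, 0, 0, 0, 0, 1, -2, 1, 0, 0;
    0, 0, 0, 0, 0, 0, 0, 0, 0, 0, 0, 0, 1, -2, 0, 0;
    0, 0, 0, 0, 0, 0, 0, 0, 0, 0, 0, 0, 0, 0, 0, 2;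
    0, 0, 0, 0, 0, 0, 0, 0, 0, 0, 0, 0, 0, 0, 2, 0]

def Hmat : Matrix (Fin 16) (Fin 16) ℤ :=
  !![0, 2, 0, 0, 0, 0, 0, 0, 0, 0, 0, 0, 0, 0, 0, 0;
    2, 0, 0, 0, 0, 0, 0, 0, 0, 0, 0, 0, 0, 0, 0, 0;
    0, 0, -2, -2, -1, -1, 0, 0, 0, 0, 0, 0, 0, 0, 0, 0;
    0, 0, -2, -4, -2, -2, 0, 0, 0, 0, 0, 0, 0, 0, 0, 0;
    0, 0, -1, -2, -2, -1, 0, 0, 0, 0, 0, 0, 0, 0, 0, 0;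
    0, 0, -1, -2, -1, -2, 0, 0, 0, 0, 0, 0, 0, 0, 0, 0;
    0, 0, 0, 0, 0, 0, -60, -30, -40, -20, -48, -36, -24, -12, 0, 0;
    0, 0, 0, 0, 0, 0, -30, -16, -20, -10, -24, -18, -12, -6, 0, 0;
    0, 0, 0, 0, 0, 0, -40, -20, -28, -14, -32, -24, -16, -8, 0, 0;
    0, 0, 0, 0, 0, 0, -20, -10, -14, -8, -16, -12, -8, -4, 0, 0;
    0, 0, 0, 0, 0, 0, -48, -24, -32, -16, -40, -30, -20, -10, 0, 0;
    0, 0, 0, 0, 0, 0, -36, -18, -24, -12, -30, -24, -16, -8, 0, 0;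
    0, 0, 0, 0, 0, 0, -24, -12, -16, -8, -20, -16, -12, -6, 0, 0;
    0, 0, 0, 0, 0, 0, -12, -6, -8, -4, -10, -8, -6, -4, 0, 0;
    0, 0, 0, 0, 0, 0, 0, 0, 0, 0, 0, 0, 0, 0, 0, 1;
    0, 0, 0, 0, 0, 0, 0, 0, 0, 0, 0, 0, 0, 0, 1, 0]

theorem Tg_eq : Tgram = Gmat := by decide

theorem HG_eq : Hmat * Tgram = (2 : ℤ) • (1 : Matrix (Fin 16) (Fin 16) ℤ) := by
  rw [Tg_eq]; decide

lemma mulVec_row0 (y : Fin 16 → ℤ) : (Gmat.mulVec y) 0 = y 1 := by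
  have h : (Gmat.mulVec y) 0 = (0 : ℤ) * y 0 + ((1 : ℤ) * y 1 + ((0 : ℤ) * y 2 + ((0 : ℤ) * y 3 + ((0 : ℤ) * y 4 + ((0 : ℤ) * y 5 + ((0 : ℤ) * y 6 + ((0 : ℤ) * y 7 + ((0 : ℤ) * y 8 + ((0 : ℤ) * y 9 + ((0 : ℤ) * y 10 + ((0 : ℤ) * y 11 + ((0 : ℤ) * y 12 + ((0 : ℤ) * y 13 + ((0 : ℤ) * y 14 + ((0 : ℤ) * y 15))))))))))))))) := by
    simp only [Matrix.mulVec, dotProduct]; rw [sum16]; rfl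
  rw [h]; ring
lemma mulVec_row1 (y : Fin 16 → ℤ) : (Gmat.mulVec y) 1 = y 0 := by
  have h : (Gmat.mulVec y) 1 = (1 : ℤ) * y 0 + ((0 : ℤ) * y 1 + ((0 : ℤ) * y 2 + ((0 : ℤ) * y 3 + ((0 : ℤ) * y 4 + ((0 : ℤ) * y 5 + ((0 : ℤ) * y 6 + ((0 : ℤ) * y 7 + ((0 : ℤ) * y 8 + ((0 : ℤ) * y 9 + ((0 : ℤ) * y 10 + ((0 : ℤ) * y 11 + ((0 : ℤ) * y 12 + ((0 : ℤ) * y 13 + ((0 : ℤ) * y 14 + ((0 : ℤ) * y 15))))))))))))))) := by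
    simp only [Matrix.mulVec, dotProduct]; rw [sum16]; rfl
  rw [h]; ring
lemma mulVec_row2 (y : Fin 16 → ℤ) : (Gmat.mulVec y) 2 = (-2) * y 2 + y 3 := by
  have h : (Gmat.mulVec y) 2 = (0 : ℤ) * y 0 + ((0 : ℤ) * y 1 + ((-2 : ℤ) * y 2 + ((1 : ℤ) * y 3 + ((0 : ℤ) * y 4 + ((0 : ℤ) * y 5 + ((0 : ℤ) * y 6 + ((0 : ℤ) * y 7 + ((0 : ℤ) * y 8 + ((0 : ℤ) * y 9 + ((0 : ℤ) * y 10 + ((0 : ℤ) * y 11 + ((0 : ℤ) * y 12 + ((0 : ℤ) * y 13 + ((0 : ℤ) * y 14 + ((0 : ℤ) * y 15))))))))))))))) := by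
    simp only [Matrix.mulVec, dotProduct]; rw [sum16]; rfl
  rw [h]; ring
lemma mulVec_row3 (y : Fin 16 → ℤ) : (Gmat.mulVec y) 3 = y 2 + (-2) * y 3 + y 4 + y 5 := by
  have h : (Gmat.mulVec y) 3 = (0 : ℤ) * y 0 + ((0 : ℤ) * y 1 + ((1 : ℤ) * y 2 + ((-2 : ℤ) * y 3 + ((1 : ℤ) * y 4 + ((1 : ℤ) * y 5 + ((0 : ℤ) * y 6 + ((0 : ℤ) * y 7 + ((0 : ℤ) * y 8 + ((0 : ℤ) * y 9 + ((0 : ℤ) * y 10 + ((0 : ℤ) * y 11 + ((0 : ℤ) * y 12 + ((0 : ℤ) * y 13 + ((0 : ℤ) * y 14 + ((0 : ℤ) * y 15))))))))))))))) := by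
    simp only [Matrix.mulVec, dotProduct]; rw [sum16]; rfl
  rw [h]; ring
lemma mulVec_row4 (y : Fin 16 → ℤ) : (Gmat.mulVec y) 4 = y 3 + (-2) * y 4 := by
  have h : (Gmat.mulVec y) 4 = (0 : ℤ) * y 0 + ((0 : ℤ) * y 1 + ((0 : ℤ) * y 2 + ((1 : ℤ) * y 3 + ((-2 : ℤ) * y 4 + ((0 : ℤ) * y 5 + ((0 : ℤ) * y 6 + ((0 : ℤ) * y 7 + ((0 : ℤ) * y 8 + ((0 : ℤ) * y 9 + ((0 : ℤ) * y 10 + ((0 : ℤ) * y 11 + ((0 : ℤ) * y 12 + ((0 : ℤ) * y 13 + ((0 : ℤ) * y 14 + ((0 : ℤ) * y 15))))))))))))))) := by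
    simp only [Matrix.mulVec, dotProduct]; rw [sum16]; rfl
  rw [h]; ring
lemma mulVec_row5 (y : Fin 16 → ℤ) : (Gmat.mulVec y) 5 = y 3 + (-2) * y 5 := by
  have h : (Gmat.mulVec y) 5 = (0 : ℤ) * y 0 + ((0 : ℤ) * y 1 + ((0 : ℤ) * y 2 + ((1 : ℤ) * y 3 + ((0 : ℤ) * y 4 + ((-2 : ℤ) * y 5 + ((0 : ℤ) * y 6 + ((0 : ℤ) * y 7 + ((0 : ℤ) * y 8 + ((0 : ℤ) * y 9 + ((0 : ℤ) * y 10 + ((0 : ℤ) * y 11 + ((0 : ℤ) * y 12 + ((0 : ℤ) * y 13 + ((0 : ℤ) * y 14 + ((0 : ℤ) * y 15))))))))))))))) := by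
    simp only [Matrix.mulVec, dotProduct]; rw [sum16]; rfl
  rw [h]; ring
lemma mulVec_row6 (y : Fin 16 → ℤ) : (Gmat.mulVec y) 6 = (-2) * y 6 + y 7 + y 8 + y 10 := by
  have h : (Gmat.mulVec y) 6 = (0 : ℤ) * y 0 + ((0 : ℤ) * y 1 + ((0 : ℤ) * y 2 + ((0 : ℤ) * y 3 + ((0 : ℤ) * y 4 + ((0 : ℤ) * y 5 + ((-2 : ℤ) * y 6 + ((1 : ℤ) * y 7 + ((1 : ℤ) * y 8 + ((0 : ℤ) * y 9 + ((1 : ℤ) * y 10 + ((0 : ℤ) * y 11 + ((0 : ℤ) * y 12 + ((0 : ℤ) * y 13 + ((0 : ℤ) * y 14 + ((0 : ℤ) * y 15))))))))))))))) := by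
    simp only [Matrix.mulVec, dotProduct]; rw [sum16]; rfl
  rw [h]; ring
lemma mulVec_row7 (y : Fin 16 → ℤ) : (Gmat.mulVec y) 7 = y 6 + (-2) * y 7 := by
  have h : (Gmat.mulVec y) 7 = (0 : ℤ) * y 0 + ((0 : ℤ) * y 1 + ((0 : ℤ) * y 2 + ((0 : ℤ) * y 3 + ((0 : ℤ) * y 4 + ((0 : ℤ) * y 5 + ((1 : ℤ) * y 6 + ((-2 : ℤ) * y 7 + ((0 : ℤ) * y 8 + ((0 : ℤ) * y 9 + ((0 : ℤ) * y 10 + ((0 : ℤ) * y 11 + ((0 : ℤ) * y 12 + ((0 : ℤ) * y 13 + ((0 : ℤ) * y 14 + ((0 : ℤ) * y 15))))))))))))))) := by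
    simp only [Matrix.mulVec, dotProduct]; rw [sum16]; rfl
  rw [h]; ring
lemma mulVec_row8 (y : Fin 16 → ℤ) : (Gmat.mulVec y) 8 = y 6 + (-2) * y 8 + y 9 := by
  have h : (Gmat.mulVec y) 8 = (0 : ℤ) * y 0 + ((0 : ℤ) * y 1 + ((0 : ℤ) * y 2 + ((0 : ℤ) * y 3 + ((0 : ℤ) * y 4 + ((0 : ℤ) * y 5 + ((1 : ℤ) * y 6 + ((0 : ℤ) * y 7 + ((-2 : ℤ) * y 8 + ((1 : ℤ) * y 9 + ((0 : ℤ) * y 10 + ((0 : ℤ) * y 11 + ((0 : ℤ) * y 12 + ((0 : ℤ) * y 13 + ((0 : ℤ) * y 14 + ((0 : ℤ) * y 15))))))))))))))) := by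
    simp only [Matrix.mulVec, dotProduct]; rw [sum16]; rfl
  rw [h]; ring
lemma mulVec_row9 (y : Fin 16 → ℤ) : (Gmat.mulVec y) 9 = y 8 + (-2) * y 9 := by
  have h : (Gmat.mulVec y) 9 = (0 : ℤ) * y 0 + ((0 : ℤ) * y 1 + ((0 : ℤ) * y 2 + ((0 : ℤ) * y 3 + ((0 : ℤ) * y 4 + ((0 : ℤ) * y 5 + ((0 : ℤ) * y 6 + ((0 : ℤ) * y 7 + ((1 : ℤ) * y 8 + ((-2 : ℤ) * y 9 + ((0 : ℤ) * y 10 + ((0 : ℤ) * y 11 + ((0 : ℤ) * y 12 + ((0 : ℤ) * y 13 + ((0 : ℤ) * y 14 + ((0 : ℤ) * y 15))))))))))))))) := by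
    simp only [Matrix.mulVec, dotProduct]; rw [sum16]; rfl
  rw [h]; ring
lemma mulVec_row10 (y : Fin 16 → ℤ) : (Gmat.mulVec y) 10 = y 6 + (-2) * y 10 + y 11 := by
  have h : (Gmat.mulVec y) 10 = (0 : ℤ) * y 0 + ((0 : ℤ) * y 1 + ((0 : ℤ) * y 2 + ((0 : ℤ) * y 3 + ((0 : ℤ) * y 4 + ((0 : ℤ) * y 5 + ((1 : ℤ) * y 6 + ((0 : ℤ) * y 7 + ((0 : ℤ) * y 8 + ((0 : ℤ) * y 9 + ((-2 : ℤ) * y 10 + ((1 : ℤ) * y 11 + ((0 : ℤ) * y 12 + ((0 : ℤ) * y 13 + ((0 : ℤ) * y 14 + ((0 : ℤ) * y 15))))))))))))))) := by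
    simp only [Matrix.mulVec, dotProduct]; rw [sum16]; rfl
  rw [h]; ring
lemma mulVec_row11 (y : Fin 16 → ℤ) : (Gmat.mulVec y) 11 = y 10 + (-2) * y 11 + y 12 := by
  have h : (Gmat.mulVec y) 11 = (0 : ℤ) * y 0 + ((0 : ℤ) * y 1 + ((0 : ℤ) * y 2 + ((0 : ℤ) * y 3 + ((0 : ℤ) * y 4 + ((0 : ℤ) * y 5 + ((0 : ℤ) * y 6 + ((0 : ℤ) * y 7 + ((0 : ℤ) * y 8 + ((0 : ℤ) * y 9 + ((1 : ℤ) * y 10 + ((-2 : ℤ) * y 11 + ((1 : ℤ) * y 12 + ((0 : ℤ) * y 13 + ((0 : ℤ) * y 14 + ((0 : ℤ) * y 15))))))))))))))) := by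
    simp only [Matrix.mulVec, dotProduct]; rw [sum16]; rfl
  rw [h]; ring
lemma mulVec_row12 (y : Fin 16 → ℤ) : (Gmat.mulVec y) 12 = y 11 + (-2) * y 12 + y 13 := by
  have h : (Gmat.mulVec y) 12 = (0 : ℤ) * y 0 + ((0 : ℤ) * y 1 + ((0 : ℤ) * y 2 + ((0 : ℤ) * y 3 + ((0 : ℤ) * y 4 + ((0 : ℤ) * y 5 + ((0 : ℤ) * y 6 + ((0 : ℤ) * y 7 + ((0 : ℤ) * y 8 + ((0 : ℤ) * y 9 + ((0 : ℤ) * y 10 + ((1 : ℤ) * y 11 + ((-2 : ℤ) * y 12 + ((1 : ℤ) * y 13 + ((0 : ℤ) * y 14 + ((0 : ℤ) * y 15))))))))))))))) := by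
    simp only [Matrix.mulVec, dotProduct]; rw [sum16]; rfl
  rw [h]; ring
lemma mulVec_row13 (y : Fin 16 → ℤ) : (Gmat.mulVec y) 13 = y 12 + (-2) * y 13 := by
  have h : (Gmat.mulVec y) 13 = (0 : ℤ) * y 0 + ((0 : ℤ) * y 1 + ((0 : ℤ) * y 2 + ((0 : ℤ) * y 3 + ((0 : ℤ) * y 4 + ((0 : ℤ) * y 5 + ((0 : ℤ) * y 6 + ((0 : ℤ) * y 7 + ((0 : ℤ) * y 8 + ((0 : ℤ) * y 9 + ((0 : ℤ) * y 10 + ((0 : ℤ) * y 11 + ((1 : ℤ) * y 12 + ((-2 : ℤ) * y 13 + ((0 : ℤ) * y 14 + ((0 : ℤ) * y 15))))))))))))))) := by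
    simp only [Matrix.mulVec, dotProduct]; rw [sum16]; rfl
  rw [h]; ring
lemma mulVec_row14 (y : Fin 16 → ℤ) : (Gmat.mulVec y) 14 = (2) * y 15 := by
  have h : (Gmat.mulVec y) 14 = (0 : ℤ) * y 0 + ((0 : ℤ) * y 1 + ((0 : ℤ) * y 2 + ((0 : ℤ) * y 3 + ((0 : ℤ) * y 4 + ((0 : ℤ) * y 5 + ((0 : ℤ) * y 6 + ((0 : ℤ) * y 7 + ((0 : ℤ) * y 8 + ((0 : ℤ) * y 9 + ((0 : ℤ) * y 10 + ((0 : ℤ) * y 11 + ((0 : ℤ) * y 12 + ((0 : ℤ) * y 13 + ((0 : ℤ) * y 14 + ((2 : ℤ) * y 15))))))))))))))) := by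
    simp only [Matrix.mulVec, dotProduct]; rw [sum16]; rfl
  rw [h]; ring
lemma mulVec_row15 (y : Fin 16 → ℤ) : (Gmat.mulVec y) 15 = (2) * y 14 := by
  have h : (Gmat.mulVec y) 15 = (0 : ℤ) * y 0 + ((0 : ℤ) * y 1 + ((0 : ℤ) * y 2 + ((0 : ℤ) * y 3 + ((0 : ℤ) * y 4 + ((0 : ℤ) * y 5 + ((0 : ℤ) * y 6 + ((0 : ℤ) * y 7 + ((0 : ℤ) * y 8 + ((0 : ℤ) * y 9 + ((0 : ℤ) * y 10 + ((0 : ℤ) * y 11 + ((0 : ℤ) * y 12 + ((0 : ℤ) * y 13 + ((2 : ℤ) * y 14 + ((0 : ℤ) * y 15))))))))))))))) := by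
    simp only [Matrix.mulVec, dotProduct]; rw [sum16]; rfl
  rw [h]; ring

theorem bT_expand (x y : Fin 16 → ℤ) : bT x y =
    x 0 * y 1 + x 1 * y 0 + (-2) * x 2 * y 2 + x 2 * y 3 + x 3 * y 2 + (-2) * x 3 * y 3 + x 3 * y 4 + x 3 * y 5 + x 4 * y 3 + (-2) * x 4 * y 4 + x 5 * y 3 + (-2) * x 5 * y 5 + (-2) * x 6 * y 6 + x 6 * y 7 + x 6 * y 8 + x 6 * y 10 + x 7 * y 6 + (-2) * x 7 * y 7 + x 8 * y 6 + (-2) * x 8 * y 8 + x 8 * y 9 + x 9 * y 8 + (-2) * x 9 * y 9 + x 10 * y 6 + (-2) * x 10 * y 10 + x 10 * y 11 + x 11 * y 10 + (-2) * x 11 * y 11 + x 11 * y 12 + x 12 * y 11 + (-2) * x 12 * y 12 + x 12 * y 13 + x 13 * y 12 + (-2) * x 13 * y 13 + (2) * x 14 * y 15 + (2) * x 15 * y 14 := by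
  have h : bT x y = ∑ i, x i * (Gmat.mulVec y) i := by
    rw [bT, Tg_eq]; rfl
  rw [h, sum16, mulVec_row0, mulVec_row1, mulVec_row2, mulVec_row3, mulVec_row4, mulVec_row5, mulVec_row6, mulVec_row7, mulVec_row8, mulVec_row9, mulVec_row10, mulVec_row11, mulVec_row12, mulVec_row13, mulVec_row14, mulVec_row15]
  ring

lemma bT_symm (x y : V16) : bT x y = bT y x := by
  rw [bT_expand, bT_expand]; ring

lemma bT_add_left (x y z : V16) : bT (x + y) z = bT x z + bT y z := by
  simp only [bT_expand, Pi.add_apply]; ring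

lemma bT_add_right (x y z : V16) : bT x (y + z) = bT x y + bT x z := by
  simp only [bT_expand, Pi.add_apply]; ring

lemma bT_smul_left (c : ℤ) (x y : V16) : bT (c • x) y = c * bT x y := by
  simp only [bT_expand, Pi.smul_apply, smul_eq_mul]; ring

lemma bT_smul_right (c : ℤ) (x y : V16) : bT x (c • y) = c * bT x y := by
  simp only [bT_expand, Pi.smul_apply, smul_eq_mul]; ring

lemma bT_sub_left (x y z : V16) : bT (x - y) z = bT x z - bT y z := by
  simp only [bT_expand, Pi.sub_apply]; ring

lemma bT_sub_right (x y z : V16) : bT x (y - z) = bT x y - bT x z := by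
  simp only [bT_expand, Pi.sub_apply]; ring

lemma bT_neg_right (x y : V16) : bT x (-y) = - bT x y := by
  simp only [bT_expand, Pi.neg_apply]; ring

lemma bT_even (x : V16) : ∃ k, bT x x = 2 * k := by
  exact ⟨(1) * x 0 * x 1 + (-1) * x 2 * x 2 + (1) * x 2 * x 3 + (-1) * x 3 * x 3 + (1) * x 3 * x 4 + (1) * x 3 * x 5 + (-1) * x 4 * x 4 + (-1) * x 5 * x 5 + (-1) * x 6 * x 6 + (1) * x 6 * x 7 + (1) * x 6 * x 8 + (1) * x 6 * x 10 + (-1) * x 7 * x 7 + (-1) * x 8 * x 8 + (1) * x 8 * x 9 + (-1) * x 9 * x 9 + (-1) * x 10 * x 10 + (1) * x 10 * x 11 + (-1) * x 11 * x 11 + (1) * x 11 * x 12 + (-1) * x 12 * x 12 + (1) * x 12 * x 13 + (-1) * x 13 * x 13 + (2) * x 14 * x 15, by rw [bT_expand]; ring⟩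

end Framework

section Framework2

def uv (k : Fin 16) : V16 := fun i => if i = k then 1 else 0

lemma bT_uv0 (v : V16) : bT v (uv 0) = v 1 := by
  rw [bT_expand]; simp (config := { decide := true }) only [uv, if_true, if_false]; ring
lemma bT_uv1 (v : V16) : bT v (uv 1) = v 0 := by
  rw [bT_expand]; simp (config := { decide := true }) only [uv, if_true, if_false]; ring
lemma bT_uv2 (v : V16) : bT v (uv 2) = (-2) * v 2 + v 3 := by
  rw [bT_expand]; simp (config := { decide := true }) only [uv, if_true, if_false]; ring
lemma bT_uv3 (v : V16) : bT v (uv 3) = v 2 + (-2) * v 3 + v 4 + v 5 := by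
  rw [bT_expand]; simp (config := { decide := true }) only [uv, if_true, if_false]; ring
lemma bT_uv4 (v : V16) : bT v (uv 4) = v 3 + (-2) * v 4 := by
  rw [bT_expand]; simp (config := { decide := true }) only [uv, if_true, if_false]; ring
lemma bT_uv5 (v : V16) : bT v (uv 5) = v 3 + (-2) * v 5 := by
  rw [bT_expand]; simp (config := { decide := true }) only [uv, if_true, if_false]; ring
lemma bT_uv6 (v : V16) : bT v (uv 6) = (-2) * v 6 + v 7 + v 8 + v 10 := by
  rw [bT_expand]; simp (config := { decide := true }) only [uv, if_true, if_false]; ring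
lemma bT_uv7 (v : V16) : bT v (uv 7) = v 6 + (-2) * v 7 := by
  rw [bT_expand]; simp (config := { decide := true }) only [uv, if_true, if_false]; ring
lemma bT_uv8 (v : V16) : bT v (uv 8) = v 6 + (-2) * v 8 + v 9 := by
  rw [bT_expand]; simp (config := { decide := true }) only [uv, if_true, if_false]; ring
lemma bT_uv9 (v : V16) : bT v (uv 9) = v 8 + (-2) * v 9 := by
  rw [bT_expand]; simp (config := { decide := true }) only [uv, if_true, if_false]; ring
lemma bT_uv10 (v : V16) : bT v (uv 10) = v 6 + (-2) * v 10 + v 11 := by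
  rw [bT_expand]; simp (config := { decide := true }) only [uv, if_true, if_false]; ring
lemma bT_uv11 (v : V16) : bT v (uv 11) = v 10 + (-2) * v 11 + v 12 := by
  rw [bT_expand]; simp (config := { decide := true }) only [uv, if_true, if_false]; ring
lemma bT_uv12 (v : V16) : bT v (uv 12) = v 11 + (-2) * v 12 + v 13 := by
  rw [bT_expand]; simp (config := { decide := true }) only [uv, if_true, if_false]; ring
lemma bT_uv13 (v : V16) : bT v (uv 13) = v 12 + (-2) * v 13 := by
  rw [bT_expand]; simp (config := { decide := true }) only [uv, if_true, if_false]; ring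
lemma bT_uv14 (v : V16) : bT v (uv 14) = (2) * v 15 := by
  rw [bT_expand]; simp (config := { decide := true }) only [uv, if_true, if_false]; ring
lemma bT_uv15 (v : V16) : bT v (uv 15) = (2) * v 14 := by
  rw [bT_expand]; simp (config := { decide := true }) only [uv, if_true, if_false]; ring

lemma bT_decomp (v z : V16) : bT v z = bT v (uv 0) * z 0 + bT v (uv 1) * z 1 + bT v (uv 2) * z 2 + bT v (uv 3) * z 3 + bT v (uv 4) * z 4 + bT v (uv 5) * z 5 + bT v (uv 6) * z 6 + bT v (uv 7) * z 7 + bT v (uv 8) * z 8 + bT v (uv 9) * z 9 + bT v (uv 10) * z 10 + bT v (uv 11) * z 11 + bT v (uv 12) * z 12 + bT v (uv 13) * z 13 + bT v (uv 14) * z 14 + bT v (uv 15) * z 15 := by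
  simp only [bT_uv0, bT_uv1, bT_uv2, bT_uv3, bT_uv4, bT_uv5, bT_uv6, bT_uv7, bT_uv8, bT_uv9, bT_uv10, bT_uv11, bT_uv12, bT_uv13, bT_uv14, bT_uv15]; rw [bT_expand]; ring

def eich (u m : V16) (h : ℤ) : V16 → V16 :=
  fun x => x + (bT x u) • m - (bT x m + h * bT x u) • u

lemma eich_coord (u m : V16) (h : ℤ) (x : V16) (i : Fin 16) :
    eich u m h x i = x i + (bT x u) * m i - (bT x m + h * bT x u) * u i := rfl

lemma eich_add (u m : V16) (h : ℤ) (x y : V16) :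
    eich u m h (x + y) = eich u m h x + eich u m h y := by
  funext i
  simp only [eich_coord, Pi.add_apply, bT_add_left]; ring

lemma eich_smul (u m : V16) (h : ℤ) (c : ℤ) (x : V16) :
    eich u m h (c • x) = c • eich u m h x := by
  funext i
  simp only [eich_coord, Pi.smul_apply, smul_eq_mul, bT_smul_left]; ring

lemma eich_cancel (u m : V16) (h : ℤ) (hu : bT u u = 0) (hum : bT u m = 0)
    (hm : bT m m = 2 * h) (x : V16) : eich u (-m) h (eich u m h x) = x := by
  have hmu : bT m u = 0 := by rw [bT_symm]; exact hum
  have h1 : bT (eich u m h x) u = bT x u := by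
    simp only [eich, bT_add_left, bT_sub_left, bT_smul_left, hu, hmu]; ring
  have h2 : bT (eich u m h x) (-m) = -(bT x m + 2 * h * bT x u) := by
    simp only [eich, bT_neg_right, bT_add_left, bT_sub_left, bT_smul_left, hm, hum]; ring
  funext i
  simp only [eich_coord, h1, h2, Pi.neg_apply]
  ring

def eichEquiv (u m : V16) (h : ℤ) (hu : bT u u = 0) (hum : bT u m = 0)
    (hm : bT m m = 2 * h) : V16 ≃ₗ[ℤ] V16 where
  toFun := eich u m h
  invFun := eich u (-m) h
  map_add' := eich_add u m h
  map_smul' := eich_smul u m h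
  left_inv := eich_cancel u m h hu hum hm
  right_inv := by
    intro x
    have := eich_cancel u (-m) h hu (by rw [bT_neg_right, hum]; ring)
      (by rw [show bT (-m) (-m) = bT m m by rw [bT_neg_right, bT_symm, bT_neg_right, bT_symm]; ring, hm]) x
    rwa [neg_neg] at this

lemma eichEquiv_apply (u m : V16) (h : ℤ) (hu hum hm) (x : V16) :
    eichEquiv u m h hu hum hm x = eich u m h x := rfl

lemma eich_isom (u m : V16) (h : ℤ) (hu : bT u u = 0) (hum : bT u m = 0)
    (hm : bT m m = 2 * h) (x y : V16) :
    bT (eich u m h x) (eich u m h y) = bT x y := by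
  have hmu : bT m u = 0 := by rw [bT_symm]; exact hum
  have hmy : bT m y = bT y m := bT_symm m y
  have huy : bT u y = bT y u := bT_symm u y
  simp only [eich, bT_add_left, bT_add_right, bT_sub_left, bT_sub_right,
    bT_smul_left, bT_smul_right, hu, hum, hmu, hm, hmy, huy]
  ring

def swapIdx : Fin 16 → Fin 16 := fun i => if i = 0 then 1 else if i = 1 then 0 else i

def swapUV : V16 ≃ₗ[ℤ] V16 where
  toFun := fun x i => x (swapIdx i)
  invFun := fun x i => x (swapIdx i)
  map_add' := fun x y => rfl
  map_smul' := fun c x => rfl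
  left_inv := by
    intro x; funext i
    show x (swapIdx (swapIdx i)) = x i
    rw [show swapIdx (swapIdx i) = i by revert i; decide]
  right_inv := by
    intro x; funext i
    show x (swapIdx (swapIdx i)) = x i
    rw [show swapIdx (swapIdx i) = i by revert i; decide]

lemma swapUV_coord (x : V16) (i : Fin 16) : swapUV x i = x (swapIdx i) := rfl

lemma swap_isom (x y : V16) : bT (swapUV x) (swapUV y) = bT x y := by
  show bT (fun i => x (swapIdx i)) (fun i => y (swapIdx i)) = bT x y
  rw [bT_expand, bT_expand]
  simp (config := { decide := true }) only [swapIdx, if_true, if_false]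
  ring

def RedV (v : V16) : Prop :=
  ∃ φ : V16 ≃ₗ[ℤ] V16, (∀ x y, bT (φ x) (φ y) = bT x y) ∧ (φ v = uv 0 ∨ φ v = -uv 0)

lemma red_comp (ψ : V16 ≃ₗ[ℤ] V16) (hψ : ∀ x y, bT (ψ x) (ψ y) = bT x y) (v : V16)
    (h : RedV (ψ v)) : RedV v := by
  obtain ⟨φ, hφ, hv⟩ := h
  exact ⟨ψ.trans φ, fun x y => by simp only [LinearEquiv.trans_apply, hφ, hψ], hv⟩

lemma div1_transfer (ψ : V16 ≃ₗ[ℤ] V16) (hψ : ∀ x y, bT (ψ x) (ψ y) = bT x y) (v : V16)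
    (h : ∃ z, bT v z = 1) : ∃ z, bT (ψ v) z = 1 := by
  obtain ⟨z, hz⟩ := h
  exact ⟨ψ z, by rw [hψ]; exact hz⟩

end Framework2
section Arith

lemma two_self_dvd_two_abs (z : ℤ) : (2*z) ∣ (2*|z|) := by
  rcases abs_choice z with hc | hc
  · rw [hc]
  · rw [hc]; exact ⟨-1, by ring⟩

/-- Core arithmetic for Case 1 : `b ∤ 2*u1`. -/
lemma arith1 (a b u1 u2 : ℤ) (hb : b ≠ 0) (h : ¬ b ∣ 2*u1) :
    ∃ x y r : ℤ, 0 < |r| ∧ |r| < |b| ∧ 2*u2*x + 2*u1*y + 2*b*x*y = a - r := by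
  have hB : (0:ℤ) < |b| := abs_pos.mpr hb
  have hBb : b ∣ |b| := (dvd_abs b b).mpr dvd_rfl
  obtain ⟨δ, hδdvd, hδ0, hδB⟩ : ∃ δ : ℤ, b ∣ (u1 - δ) ∧ δ ≠ 0 ∧ 2*|δ| < |b| := by
    have hed := Int.emod_add_mul_ediv u1 |b|
    set d0 := u1 % |b| with hd0
    have h1 : 0 ≤ d0 := Int.emod_nonneg u1 (ne_of_gt hB)
    have h2 : d0 < |b| := Int.emod_lt_of_pos u1 hB
    have hdvd : b ∣ (u1 - d0) := (abs_dvd b _).mp ⟨u1 / |b|, by linarith⟩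
    have hd0ne : d0 ≠ 0 := by
      intro h0
      exact h (Dvd.dvd.mul_left (by simpa [h0] using hdvd) 2)
    have hne2 : 2*d0 ≠ |b| := by
      intro heq
      apply h
      have heq2 : 2*u1 = 2*(u1 - d0) + |b| := by linarith
      rw [heq2]
      exact dvd_add (Dvd.dvd.mul_left hdvd 2) hBb
    by_cases hc : 2*d0 < |b|
    · exact ⟨d0, hdvd, hd0ne, by rwa [abs_of_nonneg h1]⟩
    · refine ⟨d0 - |b|, ?_, ?_, ?_⟩
      · have heq3 : u1 - (d0 - |b|) = (u1 - d0) + |b| := by ring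
        rw [heq3]; exact dvd_add hdvd hBb
      · intro h0; apply hne2; omega
      · rw [abs_of_neg (by omega : d0 - |b| < 0)]; omega
  set x := (δ - u1) / b with hxdef
  have hbx : b * x = δ - u1 := Int.mul_ediv_cancel' (dvd_sub_comm.mp hδdvd)
  set A := a - 2*u2*x with hA
  have habsδ : (0:ℤ) < |δ| := abs_pos.mpr hδ0
  have hs : (0:ℤ) < 2*|δ| := by linarith
  set r := (A - 1) % (2*|δ|) + 1 with hr
  have hr1 : 0 ≤ (A - 1) % (2*|δ|) := Int.emod_nonneg _ (ne_of_gt hs)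
  have hr2 : (A - 1) % (2*|δ|) < 2*|δ| := Int.emod_lt_of_pos _ hs
  have hrpos : 0 < r := by rw [hr]; linarith
  have hdr : (2*δ) ∣ (A - r) := by
    have hd1 : (2*|δ|) ∣ (A - r) := by
      have hed := Int.emod_add_mul_ediv (A - 1) (2*|δ|)
      exact ⟨(A - 1) / (2*|δ|), by linarith⟩
    exact dvd_trans (two_self_dvd_two_abs δ) hd1
  set y := (A - r) / (2*δ) with hydef
  have hy : 2*δ*y = A - r := Int.mul_ediv_cancel' hdr
  refine ⟨x, y, r, abs_pos.mpr (ne_of_gt hrpos), ?_, ?_⟩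
  · rw [abs_of_pos hrpos]; linarith
  · have hxy : 2*b*x*y = 2*y*(δ - u1) := by rw [show 2*b*x*y = 2*y*(b*x) by ring, hbx]
    linear_combination hxy + hy

/-- Core arithmetic for Case 3a : `b ∣ u1`, `b ∣ u2`, `b ∤ a`. -/
lemma arith3a (a b u1 u2 : ℤ) (hb : b ≠ 0) (h1 : b ∣ u1) (h2 : b ∣ u2) (ha : ¬ b ∣ a) :
    ∃ x y r : ℤ, 0 < |r| ∧ |r| < |b| ∧ 2*u2*x + 2*u1*y + 2*b*x*y = a - r := by
  have hB : (0:ℤ) < |b| := abs_pos.mpr hb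
  obtain ⟨w1, hw1⟩ := h1
  obtain ⟨w2, hw2⟩ := h2
  obtain ⟨r, hrdvd, hr0, hrB⟩ : ∃ r : ℤ, (2*b) ∣ (a - r) ∧ r ≠ 0 ∧ |r| < |b| := by
    have hs : (0:ℤ) < 2*|b| := by linarith
    have hed := Int.emod_add_mul_ediv a (2*|b|)
    set r0 := a % (2*|b|) with hr0def
    have h1' : 0 ≤ r0 := Int.emod_nonneg a (ne_of_gt hs)
    have h2' : r0 < 2*|b| := Int.emod_lt_of_pos a hs
    have habs : (2*b) ∣ (2*|b|) := two_self_dvd_two_abs b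
    have hdvd0 : (2*b) ∣ (a - r0) := dvd_trans habs ⟨a / (2*|b|), by linarith⟩
    have hb2 : b ∣ 2*b := ⟨2, by ring⟩
    have hr0neB : r0 ≠ |b| := by
      intro heq
      apply ha
      have hdvd1 : b ∣ (a - |b|) := dvd_trans hb2 (heq ▸ hdvd0)
      have hbB : b ∣ |b| := (dvd_abs b b).mpr dvd_rfl
      have := dvd_add hdvd1 hbB
      simpa using this
    have hr0ne0 : r0 = 0 → b ∣ a := by
      intro h0
      exact dvd_trans hb2 (by simpa [h0] using hdvd0)
    by_cases hc : r0 < |b|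
    · exact ⟨r0, hdvd0, fun h0 => ha (hr0ne0 h0), by rwa [abs_of_nonneg h1']⟩
    · refine ⟨r0 - 2*|b|, ?_, by omega, by rw [abs_of_neg (by omega : r0 - 2*|b| < 0)]; omega⟩
      have heq4 : a - (r0 - 2*|b|) = (a - r0) + 2*|b| := by ring
      rw [heq4]; exact dvd_add hdvd0 habs
  obtain ⟨k, hk⟩ := hrdvd
  refine ⟨k + w1*w2 - w1, 1 - w2, r, abs_pos.mpr hr0, hrB, ?_⟩
  rw [hw1, hw2]
  linear_combination -hk

/-- Core arithmetic for Case 3b. -/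
lemma arith3b (a b c u1 u2 m1 m2 : ℤ) (hb : b ≠ 0) (hbc : b = 2*c)
    (h1 : u1 = c*m1) (h2 : u2 = c*m2) (hm1 : ¬ 2 ∣ m1) (ha : ¬ b ∣ a) :
    ∃ x y r : ℤ, 0 < |r| ∧ |r| < |b| ∧ 2*u2*x + 2*u1*y + 2*b*x*y = a - r := by
  have hB : (0:ℤ) < |b| := abs_pos.mpr hb
  obtain ⟨r, hrdvd, hr0, hrB⟩ : ∃ r : ℤ, b ∣ (a - r) ∧ r ≠ 0 ∧ |r| < |b| := by
    have hed := Int.emod_add_mul_ediv a |b|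
    set r0 := a % |b| with hr0def
    have h1' : 0 ≤ r0 := Int.emod_nonneg a (ne_of_gt hB)
    have h2' : r0 < |b| := Int.emod_lt_of_pos a hB
    have hdvd0 : b ∣ (a - r0) := (abs_dvd b _).mp ⟨a / |b|, by linarith⟩
    refine ⟨r0, hdvd0, ?_, by rwa [abs_of_nonneg h1']⟩
    intro h0; apply ha; simpa [h0] using hdvd0
  obtain ⟨Q, hQ⟩ := hrdvd
  rw [hbc] at hQ
  set M := 2*Q + m1*m2 with hM
  have hc0 : c ≠ 0 := by rintro rfl; exact hb (by omega)
  by_cases hModd : 2 ∣ M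
  · -- M even : m2 even, (α,β) = (1, M)
    have hmm : (2:ℤ) ∣ m1*m2 := by
      obtain ⟨t, ht⟩ := hModd
      exact ⟨t - Q, by omega⟩
    have hm2even : (2:ℤ) ∣ m2 := ((Int.prime_two.dvd_mul).mp hmm).resolve_left hm1
    obtain ⟨x, hx⟩ : ∃ x : ℤ, 2*x = 1 - m1 := by
      have h2d : (2:ℤ) ∣ 1 - m1 := by omega
      obtain ⟨x, hx⟩ := h2d; exact ⟨x, hx.symm⟩
    obtain ⟨y, hy⟩ : ∃ y : ℤ, 2*y = M - m2 := by
      have h2d : (2:ℤ) ∣ M - m2 := by omega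
      obtain ⟨y, hy⟩ := h2d; exact ⟨y, hy.symm⟩
    refine ⟨x, y, r, abs_pos.mpr hr0, hrB, ?_⟩
    rw [h1, h2, hbc]
    have key : (2*x + m1) * (2*y + m2) - m1*m2 = 2*Q := by rw [hx, hy, hM]; ring
    linear_combination c * key - hQ
  · -- M odd : (α,β) = (M, 1)
    have hm2odd : ¬ (2:ℤ) ∣ m2 := by
      intro h2d
      apply hModd
      obtain ⟨t, ht⟩ := h2d
      exact ⟨Q + m1*t, by rw [hM, ht]; ring⟩
    obtain ⟨x, hx⟩ : ∃ x : ℤ, 2*x = M - m1 := by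
      have h2d : (2:ℤ) ∣ M - m1 := by omega
      obtain ⟨x, hx⟩ := h2d; exact ⟨x, hx.symm⟩
    obtain ⟨y, hy⟩ : ∃ y : ℤ, 2*y = 1 - m2 := by
      have h2d : (2:ℤ) ∣ 1 - m2 := by omega
      obtain ⟨y, hy⟩ := h2d; exact ⟨y, hy.symm⟩
    refine ⟨x, y, r, abs_pos.mpr hr0, hrB, ?_⟩
    rw [h1, h2, hbc]
    have key : (2*x + m1) * (2*y + m2) - m1*m2 = 2*Q := by rw [hx, hy, hM]; ring
    linear_combination c * key - hQ

end Arith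
section Machine

def mU (x y : ℤ) : V16 := fun i => if i = 14 then x else if i = 15 then y else 0

lemma bT_mU (v : V16) (x y : ℤ) : bT v (mU x y) = 2*(v 15)*x + 2*(v 14)*y := by
  rw [bT_expand]; simp (config := { decide := true }) only [mU, if_true, if_false]; ring

lemma bT_mU_self (x y : ℤ) : bT (mU x y) (mU x y) = 2*(2*x*y) := by
  rw [bT_expand]; simp (config := { decide := true }) only [mU, if_true, if_false]; ring

lemma uv_ne {k i : Fin 16} (h : i ≠ k) : uv k i = 0 := if_neg h

lemma bT_e00 : bT (uv 0) (uv 0) = 0 := by decide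

lemma bT_e01 : bT (uv 0) (uv 1) = 1 := by decide

lemma bT_e10 : bT (uv 1) (uv 0) = 1 := by decide

lemma bT_e11 : bT (uv 1) (uv 1) = 0 := by decide

lemma bT_uvj_facts : ∀ j : Fin 16, 2 ≤ (j:ℕ) → (j:ℕ) ≤ 13 →
    bT (uv 0) (uv j) = 0 ∧ bT (uv 14) (uv 14) = 0 ∧ bT (uv 14) (uv j) = 0 ∧
    bT (uv j) (uv j) = -2 := by decide

/-- the basic `U(2)`-coordinate Eichler move, composed with the `U`-swap. -/
lemma applyMove (v : V16) (x y : ℤ) :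
    ∃ ψ : V16 ≃ₗ[ℤ] V16, (∀ p q, bT (ψ p) (ψ q) = bT p q) ∧
      (ψ v) 1 = v 0 - (2*(v 15)*x + 2*(v 14)*y + 2*(v 1)*x*y) := by
  have h1 : bT (uv 0) (uv 0) = 0 := bT_e00
  have h2 : bT (uv 0) (mU x y) = 0 := by
    rw [bT_mU, show ((uv 0) 15 : ℤ) = 0 from rfl, show ((uv 0) 14 : ℤ) = 0 from rfl]; ring
  have h3 : bT (mU x y) (mU x y) = 2*(2*x*y) := bT_mU_self x y
  refine ⟨(eichEquiv (uv 0) (mU x y) (2*x*y) h1 h2 h3).trans swapUV, ?_, ?_⟩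
  · intro p q
    simp only [LinearEquiv.trans_apply]
    rw [swap_isom, eichEquiv_apply, eichEquiv_apply, eich_isom _ _ _ h1 h2 h3]
  · simp only [LinearEquiv.trans_apply]
    rw [show ∀ w : V16, swapUV w 1 = w 0 from fun w => rfl]
    rw [eichEquiv_apply]
    rw [eich_coord]
    rw [bT_uv0, bT_mU, show (mU x y) 0 = 0 from rfl, show ((uv 0) 0 : ℤ) = 1 from rfl]
    ring

lemma stepOf (v : V16) (x y r : ℤ) (hr0 : 0 < |r|) (hrB : |r| < |v 1|)
    (heq : 2*(v 15)*x + 2*(v 14)*y + 2*(v 1)*x*y = v 0 - r) :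
    ∃ ψ : V16 ≃ₗ[ℤ] V16, (∀ p q, bT (ψ p) (ψ q) = bT p q) ∧
      (ψ v) 1 ≠ 0 ∧ |(ψ v) 1| < |v 1| := by
  obtain ⟨ψ, hi, hval⟩ := applyMove v x y
  have hv : (ψ v) 1 = r := by rw [hval]; linarith
  exact ⟨ψ, hi, by rw [hv]; exact abs_pos.mp hr0, by rw [hv]; exact hrB⟩

lemma case1core (v : V16) (hbne : v 1 ≠ 0) (h : ¬ (v 1 ∣ 2 * v 14)) :
    ∃ ψ : V16 ≃ₗ[ℤ] V16, (∀ p q, bT (ψ p) (ψ q) = bT p q) ∧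
      (ψ v) 1 ≠ 0 ∧ |(ψ v) 1| < |v 1| := by
  obtain ⟨x, y, r, hr0, hrB, heq⟩ := arith1 (v 0) (v 1) (v 14) (v 15) hbne h
  exact stepOf v x y r hr0 hrB heq

end Machine
section Machine2

lemma fin_ne_of_lt {j : Fin 16} (hj2 : 2 ≤ (j:ℕ)) : ((0:Fin 16) ≠ j) ∧ ((1:Fin 16) ≠ j) := by
  constructor <;> · intro he; subst he; exact absurd hj2 (by decide)

lemma fin_ne_of_le {j : Fin 16} (hj13 : (j:ℕ) ≤ 13) : ((14:Fin 16) ≠ j) ∧ ((15:Fin 16) ≠ j) := by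
  constructor <;> · intro he; subst he; exact absurd hj13 (by decide)

lemma dodge (v : V16) (j : Fin 16) (hj2 : 2 ≤ (j:ℕ)) (hj13 : (j:ℕ) ≤ 13) :
    ∃ ψ : V16 ≃ₗ[ℤ] V16, (∀ p q, bT (ψ p) (ψ q) = bT p q) ∧
      (ψ v) 0 = v 0 ∧ (ψ v) 1 = v 1 ∧
      (ψ v) 14 = v 14 - bT v (uv j) + 2*(v 15) ∧ (ψ v) 15 = v 15 := by
  obtain ⟨f1, f2, f3, f4⟩ := bT_uvj_facts j hj2 hj13
  have f4' : bT (uv j) (uv j) = 2 * (-1) := by rw [f4]; ring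
  obtain ⟨hne0, hne1⟩ := fin_ne_of_lt hj2
  obtain ⟨hne14, hne15⟩ := fin_ne_of_le hj13
  refine ⟨eichEquiv (uv 14) (uv j) (-1) f2 f3 f4', ?_, ?_, ?_, ?_, ?_⟩
  · intro p q; rw [eichEquiv_apply, eichEquiv_apply, eich_isom _ _ _ f2 f3 f4']
  · rw [eichEquiv_apply, eich_coord, bT_uv14, uv_ne hne0,
      show ((uv 14) 0 : ℤ) = 0 from rfl]; ring
  · rw [eichEquiv_apply, eich_coord, bT_uv14, uv_ne hne1,
      show ((uv 14) 1 : ℤ) = 0 from rfl]; ring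
  · rw [eichEquiv_apply, eich_coord, bT_uv14, uv_ne hne14,
      show ((uv 14) 14 : ℤ) = 1 from rfl]; ring
  · rw [eichEquiv_apply, eich_coord, bT_uv14, uv_ne hne15,
      show ((uv 14) 15 : ℤ) = 0 from rfl]; ring

lemma applyMoveEnd (v : V16) (j : Fin 16) (hj2 : 2 ≤ (j:ℕ)) (hj13 : (j:ℕ) ≤ 13) (x y : ℤ) :
    ∃ ψ : V16 ≃ₗ[ℤ] V16, (∀ p q, bT (ψ p) (ψ q) = bT p q) ∧
      (ψ v) 1 = v 0 - bT v (uv j) + v 1 - (2*(v 15)*x + 2*(v 14)*y + 2*(v 1)*x*y) := by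
  obtain ⟨f1, f2, f3, f4⟩ := bT_uvj_facts j hj2 hj13
  obtain ⟨hne0, hne1⟩ := fin_ne_of_lt hj2
  obtain ⟨hne14, hne15⟩ := fin_ne_of_le hj13
  have c2 : bT (uv 0) (uv j + mU x y) = 0 := by
    rw [bT_add_right, f1, bT_mU, show ((uv 0) 15 : ℤ) = 0 from rfl,
      show ((uv 0) 14 : ℤ) = 0 from rfl]; ring
  have hjmU : bT (uv j) (mU x y) = 0 := by
    rw [bT_mU, uv_ne hne15, uv_ne hne14]; ring
  have c3 : bT (uv j + mU x y) (uv j + mU x y) = 2*(-1 + 2*x*y) := by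
    rw [bT_add_right, bT_add_left, bT_add_left, f4, bT_mU_self, hjmU,
      show bT (mU x y) (uv j) = 0 from (bT_symm _ _).trans hjmU]
    ring
  refine ⟨(eichEquiv (uv 0) (uv j + mU x y) (-1 + 2*x*y) bT_e00 c2 c3).trans swapUV, ?_, ?_⟩
  · intro p q
    simp only [LinearEquiv.trans_apply]
    rw [swap_isom, eichEquiv_apply, eichEquiv_apply, eich_isom _ _ _ bT_e00 c2 c3]
  · simp only [LinearEquiv.trans_apply]
    rw [show ∀ w : V16, swapUV w 1 = w 0 from fun w => rfl, eichEquiv_apply, eich_coord,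
      bT_uv0, bT_add_right, bT_mU,
      show (uv j + mU x y) 0 = 0 by
        show uv j 0 + mU x y 0 = 0
        rw [uv_ne hne0, show mU x y 0 = 0 from rfl]; ring,
      show ((uv 0) 0 : ℤ) = 1 from rfl]
    ring

lemma exists_j2 (v : V16) (hdiv : ∃ z, bT v z = 1) (ha : (2:ℤ) ∣ v 0) (hb : (2:ℤ) ∣ v 1) :
    ∃ j : Fin 16, 2 ≤ (j:ℕ) ∧ (j:ℕ) ≤ 13 ∧ ¬ (2:ℤ) ∣ bT v (uv j) := by
  by_contra hno
  simp only [not_exists, not_and, not_not] at hno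
  obtain ⟨z, hz⟩ := hdiv
  have h2 : (2:ℤ) ∣ bT v z := by
    rw [bT_decomp v z]
    repeat' apply dvd_add
    · rw [bT_uv0]; exact dvd_mul_of_dvd_left hb _
    · rw [bT_uv1]; exact dvd_mul_of_dvd_left ha _
    · exact dvd_mul_of_dvd_left (hno 2 (by decide) (by decide)) _
    · exact dvd_mul_of_dvd_left (hno 3 (by decide) (by decide)) _
    · exact dvd_mul_of_dvd_left (hno 4 (by decide) (by decide)) _
    · exact dvd_mul_of_dvd_left (hno 5 (by decide) (by decide)) _
    · exact dvd_mul_of_dvd_left (hno 6 (by decide) (by decide)) _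
    · exact dvd_mul_of_dvd_left (hno 7 (by decide) (by decide)) _
    · exact dvd_mul_of_dvd_left (hno 8 (by decide) (by decide)) _
    · exact dvd_mul_of_dvd_left (hno 9 (by decide) (by decide)) _
    · exact dvd_mul_of_dvd_left (hno 10 (by decide) (by decide)) _
    · exact dvd_mul_of_dvd_left (hno 11 (by decide) (by decide)) _
    · exact dvd_mul_of_dvd_left (hno 12 (by decide) (by decide)) _
    · exact dvd_mul_of_dvd_left (hno 13 (by decide) (by decide)) _
    · rw [bT_uv14]; exact dvd_mul_of_dvd_left ⟨v 15, by ring⟩ _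
    · rw [bT_uv15]; exact dvd_mul_of_dvd_left ⟨v 14, by ring⟩ _
  rw [hz] at h2
  norm_num at h2

lemma exists_j (v : V16) (hdiv : ∃ z, bT v z = 1) (hb3 : 3 ≤ |v 1|) (hba : v 1 ∣ v 0)
    (h14 : v 1 ∣ 2*(v 14)) (h15 : v 1 ∣ 2*(v 15)) :
    ∃ j : Fin 16, 2 ≤ (j:ℕ) ∧ (j:ℕ) ≤ 13 ∧ ¬ (v 1 ∣ 2 * bT v (uv j)) := by
  by_contra hno
  simp only [not_exists, not_and, not_not] at hno
  obtain ⟨z, hz⟩ := hdiv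
  have key : 2 * bT v z = (2*bT v (uv 0)) * z 0 + ((2*bT v (uv 1)) * z 1 +
      ((2*bT v (uv 2)) * z 2 + ((2*bT v (uv 3)) * z 3 + ((2*bT v (uv 4)) * z 4 +
      ((2*bT v (uv 5)) * z 5 + ((2*bT v (uv 6)) * z 6 + ((2*bT v (uv 7)) * z 7 +
      ((2*bT v (uv 8)) * z 8 + ((2*bT v (uv 9)) * z 9 + ((2*bT v (uv 10)) * z 10 +
      ((2*bT v (uv 11)) * z 11 + ((2*bT v (uv 12)) * z 12 + ((2*bT v (uv 13)) * z 13 +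
      ((2*bT v (uv 14)) * z 14 + (2*bT v (uv 15)) * z 15)))))))))))))) := by
    rw [bT_decomp v z]; ring
  obtain ⟨w, hw⟩ := hba
  have h2 : v 1 ∣ 2 * bT v z := by
    rw [key]
    repeat' apply dvd_add
    · rw [bT_uv0]; exact ⟨2 * z 0, by ring⟩
    · rw [bT_uv1, hw]; exact ⟨2 * w * z 1, by ring⟩
    · exact dvd_mul_of_dvd_left (hno 2 (by decide) (by decide)) _
    · exact dvd_mul_of_dvd_left (hno 3 (by decide) (by decide)) _
    · exact dvd_mul_of_dvd_left (hno 4 (by decide) (by decide)) _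
    · exact dvd_mul_of_dvd_left (hno 5 (by decide) (by decide)) _
    · exact dvd_mul_of_dvd_left (hno 6 (by decide) (by decide)) _
    · exact dvd_mul_of_dvd_left (hno 7 (by decide) (by decide)) _
    · exact dvd_mul_of_dvd_left (hno 8 (by decide) (by decide)) _
    · exact dvd_mul_of_dvd_left (hno 9 (by decide) (by decide)) _
    · exact dvd_mul_of_dvd_left (hno 10 (by decide) (by decide)) _
    · exact dvd_mul_of_dvd_left (hno 11 (by decide) (by decide)) _
    · exact dvd_mul_of_dvd_left (hno 12 (by decide) (by decide)) _
    · exact dvd_mul_of_dvd_left (hno 13 (by decide) (by decide)) _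
    · rw [bT_uv14]
      obtain ⟨w15, hw15⟩ := h15
      exact ⟨2 * w15 * z 14, by linear_combination (2 * z 14) * hw15⟩
    · rw [bT_uv15]
      obtain ⟨w14, hw14⟩ := h14
      exact ⟨2 * w14 * z 15, by linear_combination (2 * z 15) * hw14⟩
  rw [hz, mul_one] at h2
  have := Int.le_of_dvd (by norm_num) ((abs_dvd _ _).mpr h2)
  omega

lemma arithEnd (a b u1 u2 p : ℤ) (hb : b = 2 ∨ b = -2) (ha : (2:ℤ) ∣ a)
    (hp : ¬ (2:ℤ) ∣ p) (hu1 : ¬ (2:ℤ) ∣ u1) :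
    ∃ x y : ℤ, 2*u2*x + 2*u1*y + 2*b*x*y = (a - p + b) - 1 := by
  obtain ⟨t, ht⟩ : ∃ t : ℤ, a - p + b - 1 = 2*t := by
    have h2 : (2:ℤ) ∣ a - p + b - 1 := by rcases hb with rfl | rfl <;> omega
    obtain ⟨t, ht⟩ := h2; exact ⟨t, ht⟩
  obtain ⟨x0, hx0⟩ : ∃ x0 : ℤ, b*x0 = 1 - u1 := by
    have h2 : (2:ℤ) ∣ 1 - u1 := by omega
    obtain ⟨w, hw⟩ := h2
    rcases hb with rfl | rfl
    · exact ⟨w, hw.symm⟩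
    · exact ⟨-w, by omega⟩
  refine ⟨x0, t - u2*x0, ?_⟩
  linear_combination 2*(t - u2*x0)*hx0 - ht

lemma endMove (v : V16) (hdiv : ∃ z, bT v z = 1) (hb2 : v 1 = 2 ∨ v 1 = -2)
    (h2a : (2:ℤ) ∣ v 0) (hu1 : ¬ (2:ℤ) ∣ v 14) :
    ∃ ψ : V16 ≃ₗ[ℤ] V16, (∀ p q, bT (ψ p) (ψ q) = bT p q) ∧ (ψ v) 1 = 1 := by
  have h2b : (2:ℤ) ∣ v 1 := by rcases hb2 with h | h <;> rw [h] <;> norm_num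
  obtain ⟨j, hj2, hj13, hjodd⟩ := exists_j2 v hdiv h2a h2b
  obtain ⟨x, y, heq⟩ := arithEnd (v 0) (v 1) (v 14) (v 15) (bT v (uv j)) hb2 h2a hjodd hu1
  obtain ⟨ψ, hiso, hval⟩ := applyMoveEnd v j hj2 hj13 x y
  exact ⟨ψ, hiso, by rw [hval]; linarith⟩

end Machine2
section Machine3

lemma coprime_two_of_odd (b : ℤ) (h : ¬ (2:ℤ) ∣ b) : IsCoprime b (2:ℤ) := by
  rw [Int.isCoprime_iff_gcd_eq_one]
  have h1 : (Int.gcd b 2 : ℤ) ∣ 2 := Int.gcd_dvd_right b 2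
  have h2 : (Int.gcd b 2 : ℤ) ∣ b := Int.gcd_dvd_left b 2
  have h1' : Int.gcd b 2 ∣ 2 := by exact_mod_cast h1
  rcases (Nat.dvd_prime Nat.prime_two).mp h1' with he | he
  · exact he
  · exfalso; apply h; rw [he] at h2; exact_mod_cast h2

lemma quot_odd (b x : ℤ) (hb : b ∣ 2*x) (hnx : ¬ b ∣ x) :
    ∃ c m : ℤ, b = 2*c ∧ x = c*m ∧ ¬ (2:ℤ) ∣ m := by
  have h2b : (2:ℤ) ∣ b := by
    by_contra hodd
    exact hnx (((coprime_two_of_odd b hodd).dvd_of_dvd_mul_left) hb)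
  obtain ⟨c, hc⟩ := h2b
  obtain ⟨k, hk⟩ := hb
  rw [hc] at hk
  have hx : x = c * k := by
    have h2 : (2:ℤ) * x = 2 * (c * k) := by linear_combination hk
    exact mul_left_cancel₀ two_ne_zero h2
  refine ⟨c, k, hc, hx, ?_⟩
  intro h2m
  obtain ⟨k', hk'⟩ := h2m
  exact hnx ⟨k', by rw [hx, hk', hc]; ring⟩

lemma step (v : V16) (hdiv : ∃ z, bT v z = 1) (hb : 2 ≤ |v 1|) :
    ∃ ψ : V16 ≃ₗ[ℤ] V16, (∀ p q, bT (ψ p) (ψ q) = bT p q) ∧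
      (ψ v) 1 ≠ 0 ∧ |(ψ v) 1| < |v 1| := by
  have hbne : v 1 ≠ 0 := by intro h0; rw [h0] at hb; norm_num at hb
  by_cases hc1 : v 1 ∣ 2 * v 14
  · by_cases hc2 : v 1 ∣ 2 * v 15
    · by_cases hba : v 1 ∣ v 0
      · by_cases hb3 : 3 ≤ |v 1|
        · -- dodge → case 1
          obtain ⟨j, hj2, hj13, hjodd⟩ := exists_j v hdiv hb3 hba hc1 hc2
          obtain ⟨ψ1, hiso1, e0, e1, e14, e15⟩ := dodge v j hj2 hj13
          have hnd : ¬ ((ψ1 v) 1 ∣ 2 * (ψ1 v) 14) := by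
            rw [e1, e14]
            intro hdd
            apply hjodd
            have h2 : 2 * bT v (uv j)
                = 2*(v 14) + 2*(2*(v 15)) - 2*(v 14 - bT v (uv j) + 2*(v 15)) := by ring
            rw [h2]
            exact dvd_sub (dvd_add hc1 (Dvd.dvd.mul_left hc2 2)) hdd
          obtain ⟨ψ2, hiso2, hne2, hlt2⟩ := case1core (ψ1 v) (by rw [e1]; exact hbne) hnd
          refine ⟨ψ1.trans ψ2, ?_, ?_, ?_⟩
          · intro p q; simp only [LinearEquiv.trans_apply]; rw [hiso2, hiso1]
          · simpa only [LinearEquiv.trans_apply] using hne2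
          · simp only [LinearEquiv.trans_apply]
            calc |(ψ2 (ψ1 v)) 1| < |(ψ1 v) 1| := hlt2
            _ = |v 1| := by rw [e1]
        · -- endgame : |v 1| = 2
          have hb2 : v 1 = 2 ∨ v 1 = -2 := by
            rcases abs_cases (v 1) with ⟨he, h0⟩ | ⟨he, h0⟩ <;> omega
          have h2a : (2:ℤ) ∣ v 0 := by
            obtain ⟨w, hw⟩ := hba
            rcases hb2 with h | h
            · exact ⟨w, by rw [hw, h]⟩
            · exact ⟨-w, by rw [hw, h]; ring⟩
          have hend : ∀ w : V16, (∃ z, bT w z = 1) → (w 1 = 2 ∨ w 1 = -2) → (2:ℤ) ∣ w 0 →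
              ¬ (2:ℤ) ∣ w 14 →
              ∃ ψ : V16 ≃ₗ[ℤ] V16, (∀ p q, bT (ψ p) (ψ q) = bT p q) ∧
                (ψ w) 1 ≠ 0 ∧ |(ψ w) 1| < 2 := by
            intro w hdivw hb2w h2aw hu1w
            obtain ⟨ψ, hisoψ, hval⟩ := endMove w hdivw hb2w h2aw hu1w
            exact ⟨ψ, hisoψ, by rw [hval]; norm_num, by rw [hval]; norm_num⟩
          have habs2 : |v 1| = 2 := by rcases hb2 with h | h <;> rw [h] <;> norm_num
          by_cases hu1 : (2:ℤ) ∣ v 14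
          · -- dodge first
            have h2b : (2:ℤ) ∣ v 1 := by rcases hb2 with h | h <;> rw [h] <;> norm_num
            obtain ⟨j, hj2, hj13, hjodd⟩ := exists_j2 v hdiv h2a h2b
            obtain ⟨ψ1, hiso1, e0, e1, e14, e15⟩ := dodge v j hj2 hj13
            obtain ⟨ψ2, hiso2, hne2, hlt2⟩ := hend (ψ1 v)
              (div1_transfer ψ1 hiso1 v hdiv)
              (by rw [e1]; exact hb2) (by rw [e0]; exact h2a)
              (by rw [e14]; intro hdd; obtain ⟨w1, hw1⟩ := hu1; obtain ⟨w2, hw2⟩ := hdd; omega)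
            refine ⟨ψ1.trans ψ2, ?_, ?_, ?_⟩
            · intro p q; simp only [LinearEquiv.trans_apply]; rw [hiso2, hiso1]
            · simpa only [LinearEquiv.trans_apply] using hne2
            · simp only [LinearEquiv.trans_apply]; rw [habs2]; exact hlt2
          · obtain ⟨ψ, hisoψ, hne', hlt'⟩ := hend v hdiv hb2 h2a hu1
            exact ⟨ψ, hisoψ, hne', by rw [habs2]; exact hlt'⟩
      · -- b ∤ a : cases 3a / 3b
        by_cases hd14 : v 1 ∣ v 14
        · by_cases hd15 : v 1 ∣ v 15
          · obtain ⟨x, y, r, hr0, hrB, heq⟩ :=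
              arith3a (v 0) (v 1) (v 14) (v 15) hbne hd14 hd15 hba
            exact stepOf v x y r hr0 hrB heq
          · -- v 15 has odd quotient
            obtain ⟨c, m2, hc, hm2, hm2odd⟩ := quot_odd (v 1) (v 15) hc2 hd15
            obtain ⟨m1, hm1⟩ : ∃ m1, v 14 = c * m1 := by
              obtain ⟨k, hk⟩ := hc1
              rw [hc] at hk
              exact ⟨k, mul_left_cancel₀ two_ne_zero (by linear_combination hk)⟩
            obtain ⟨x, y, r, hr0, hrB, heq⟩ :=
              arith3b (v 0) (v 1) c (v 15) (v 14) m2 m1 hbne hc hm2 hm1 hm2odd hba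
            exact stepOf v y x r hr0 hrB (by linear_combination heq)
        · -- v 14 has odd quotient
          obtain ⟨c, m1, hc, hm1, hm1odd⟩ := quot_odd (v 1) (v 14) hc1 hd14
          obtain ⟨m2, hm2⟩ : ∃ m2, v 15 = c * m2 := by
            obtain ⟨k, hk⟩ := hc2
            rw [hc] at hk
            exact ⟨k, mul_left_cancel₀ two_ne_zero (by linear_combination hk)⟩
          obtain ⟨x, y, r, hr0, hrB, heq⟩ :=
            arith3b (v 0) (v 1) c (v 14) (v 15) m1 m2 hbne hc hm1 hm2 hm1odd hba
          exact stepOf v x y r hr0 hrB heq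
    · -- case 2
      obtain ⟨x, y, r, hr0, hrB, heq⟩ := arith1 (v 0) (v 1) (v 15) (v 14) hbne hc2
      exact stepOf v y x r hr0 hrB (by linear_combination heq)
  · exact case1core v hbne hc1

end Machine3
section Machine4

def nPart (v : V16) : V16 := fun i => if i = 0 then 0 else if i = 1 then 0 else v i

lemma nPart_bT (v z : V16) : bT v (nPart z) = bT v z - (v 0)*(z 1) - (v 1)*(z 0) := by
  rw [bT_expand, bT_expand]
  simp (config := { decide := true }) only [nPart, if_true, if_false]
  ring

lemma nPart_coord0 (v : V16) : nPart v 0 = 0 := rfl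
lemma nPart_coord1 (v : V16) : nPart v 1 = 0 := rfl
lemma nPart_coord (v : V16) {i : Fin 16} (h0 : i ≠ 0) (h1 : i ≠ 1) : nPart v i = v i := by
  show (if i = 0 then 0 else if i = 1 then 0 else v i) = v i
  rw [if_neg h0, if_neg h1]

lemma red_target (c : ℤ) (hc : c = 1 ∨ c = -1) : RedV (c • uv 0) := by
  refine ⟨LinearEquiv.refl ℤ V16, fun p q => rfl, ?_⟩
  rcases hc with rfl | rfl
  · left; simp
  · right; simp

lemma swap_uv1 : swapUV (uv 1) = uv 0 := by
  funext i
  show uv 1 (swapIdx i) = uv 0 i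
  revert i; decide

lemma smul_coord (c : ℤ) (w : V16) (i : Fin 16) : (c • w) i = c * w i := rfl

lemma FIN (v : V16) (hiso : bT v v = 0) (h1 : v 1 = 1 ∨ v 1 = -1) : RedV v := by
  have hv1sq : v 1 * v 1 = 1 := by rcases h1 with h | h <;> rw [h] <;> norm_num
  have c2 : bT (uv 0) ((-(v 1)) • nPart v) = 0 := by
    rw [bT_symm, bT_uv0, smul_coord, nPart_coord1]; ring
  obtain ⟨h, hh⟩ := bT_even ((-(v 1)) • nPart v)
  have hh' : bT ((-(v 1)) • nPart v) ((-(v 1)) • nPart v) = 2 * h := hh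
  have hw : eich (uv 0) ((-(v 1)) • nPart v) h v
      = (v 0 - (bT v ((-(v 1)) • nPart v) + h * v 1)) • uv 0 + (v 1) • uv 1 := by
    funext i
    rw [show ((v 0 - (bT v ((-(v 1)) • nPart v) + h * v 1)) • uv 0 + (v 1) • uv 1) i
        = (v 0 - (bT v ((-(v 1)) • nPart v) + h * v 1)) * uv 0 i + (v 1) * uv 1 i from rfl]
    rw [eich_coord, bT_uv0, smul_coord]
    by_cases h0 : i = 0
    · subst h0
      rw [nPart_coord0, show ((uv 0) 0 : ℤ) = 1 from rfl, show ((uv 1) 0 : ℤ) = 0 from rfl]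
      ring
    · by_cases h1' : i = 1
      · subst h1'
        rw [nPart_coord1, show ((uv 0) 1 : ℤ) = 0 from rfl, show ((uv 1) 1 : ℤ) = 1 from rfl]
        ring
      · rw [nPart_coord v h0 h1', uv_ne h0, uv_ne h1']
        linear_combination (-(v i)) * hv1sq
  have hiso2 : bT (eich (uv 0) ((-(v 1)) • nPart v) h v) (eich (uv 0) ((-(v 1)) • nPart v) h v) = 0 := by
    rw [eich_isom _ _ _ bT_e00 c2 hh']; exact hiso
  rw [hw] at hiso2
  have hbw : bT ((v 0 - (bT v ((-(v 1)) • nPart v) + h * v 1)) • uv 0 + (v 1) • uv 1)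
      ((v 0 - (bT v ((-(v 1)) • nPart v) + h * v 1)) • uv 0 + (v 1) • uv 1)
      = 2 * (v 0 - (bT v ((-(v 1)) • nPart v) + h * v 1)) * v 1 := by
    simp only [bT_add_left, bT_add_right, bT_smul_left, bT_smul_right,
      bT_e00, bT_e01, bT_e10, bT_e11]
    ring
  rw [hbw] at hiso2
  have hC : v 0 - (bT v ((-(v 1)) • nPart v) + h * v 1) = 0 := by
    have hvne : v 1 ≠ 0 := by rcases h1 with h' | h' <;> rw [h'] <;> norm_num
    rcases mul_eq_zero.mp hiso2 with h2 | h2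
    · linarith
    · exact absurd h2 hvne
  rw [hC] at hw
  have hw2 : eich (uv 0) ((-(v 1)) • nPart v) h v = (v 1) • uv 1 := by rw [hw]; simp
  apply red_comp (eichEquiv (uv 0) ((-(v 1)) • nPart v) h bT_e00 c2 hh')
    (fun p q => by rw [eichEquiv_apply, eichEquiv_apply]; exact eich_isom _ _ _ bT_e00 c2 hh' p q) v
  apply red_comp swapUV swap_isom
  have hfin : swapUV (eichEquiv (uv 0) ((-(v 1)) • nPart v) h bT_e00 c2 hh' v) = (v 1) • uv 0 := by
    rw [eichEquiv_apply, hw2, swapUV.map_smul, swap_uv1]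
  rw [hfin]
  exact red_target (v 1) h1

lemma QK : ∀ K : ℕ, ∀ v : V16, bT v v = 0 → (∃ z, bT v z = 1) → v 1 ≠ 0 →
    (v 1).natAbs ≤ K → RedV v := by
  intro K
  induction K with
  | zero => intro v _ _ hne hle; exact absurd hle (by omega)
  | succ K ih =>
    intro v hiso hdiv hne hle
    by_cases h1 : (v 1).natAbs = 1
    · exact FIN v hiso (by omega)
    · have hb : 2 ≤ |v 1| := by rw [Int.abs_eq_natAbs]; omega
      obtain ⟨ψ, hiso', hne', hlt'⟩ := step v hdiv hb
      apply red_comp ψ hiso' v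
      apply ih (ψ v) (by rw [hiso']; exact hiso) (div1_transfer ψ hiso' v hdiv) hne'
      rw [Int.abs_eq_natAbs, Int.abs_eq_natAbs] at hlt'
      omega

lemma partB (v : V16) (hiso : bT v v = 0) (hdiv : ∃ z, bT v z = 1) : RedV v := by
  by_cases hb0 : v 1 = 0
  · by_cases ha0 : v 0 = 0
    · -- T_f move to make the second coordinate -1
      obtain ⟨z, hz⟩ := hdiv
      have c2 : bT (uv 1) (nPart z) = 0 := by
        rw [bT_symm, bT_uv1, nPart_coord0]
      obtain ⟨h, hh⟩ := bT_even (nPart z)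
      have hh' : bT (nPart z) (nPart z) = 2 * h := hh
      have hφiso : ∀ p q, bT (eich (uv 1) (nPart z) h p) (eich (uv 1) (nPart z) h q) = bT p q :=
        fun p q => eich_isom _ _ _ bT_e11 c2 hh' p q
      apply red_comp (eichEquiv (uv 1) (nPart z) h bT_e11 c2 hh')
        (fun p q => by rw [eichEquiv_apply, eichEquiv_apply]; exact hφiso p q) v
      have hbvm : bT v (nPart z) = 1 := by rw [nPart_bT, hz, hb0, ha0]; ring
      have hbvu : bT v (uv 1) = 0 := by rw [bT_uv1]; exact ha0
      apply FIN
      · rw [eichEquiv_apply]; rw [hφiso]; exact hiso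
      · right
        rw [eichEquiv_apply, eich_coord, hbvu, hbvm, hb0,
          show ((uv 1) 1 : ℤ) = 1 from rfl]
        ring
    · -- v 1 = 0 but v 0 ≠ 0 : swap first
      apply red_comp swapUV swap_isom v
      have h1 : (swapUV v) 1 = v 0 := rfl
      apply QK ((swapUV v) 1).natAbs (swapUV v)
      · rw [swap_isom]; exact hiso
      · exact div1_transfer swapUV swap_isom v hdiv
      · rw [h1]; exact ha0
      · exact le_rfl
  · exact QK (v 1).natAbs v hiso hdiv hb0 le_rfl

end Machine4
section PartA

open Submodule in
lemma pair_unique {x y : V16} (hli : LinearIndependent ℤ ![x, y]) :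
    ∀ s t : ℤ, s • x + t • y = 0 → s = 0 ∧ t = 0 := by
  intro s t hst
  have h := Fintype.linearIndependent_iff.mp hli ![s, t] ?_
  · exact ⟨h 0, h 1⟩
  · rw [Fin.sum_univ_two]
    simpa using hst

lemma li_pair (x y : V16) (h : ∀ s t : ℤ, s • x + t • y = 0 → s = 0 ∧ t = 0) :
    LinearIndependent ℤ ![x, y] := by
  apply Fintype.linearIndependent_iff.mpr
  intro g hg
  rw [Fin.sum_univ_two] at hg
  have h2 := h (g 0) (g 1) (by simpa using hg)
  intro i; fin_cases i
  · exact h2.1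
  · exact h2.2

lemma mulVec_eq_bT (w : V16) (j : Fin 16) : (Tgram.mulVec w) j = bT (uv j) w := by
  show _ = (uv j) ⬝ᵥ Tgram.mulVec w
  simp [dotProduct, uv]

lemma divOne (E : Submodule ℤ V16) (c1 c2 : V16)
    (hspan : E = Submodule.span ℤ {c1, c2}) (hli : LinearIndependent ℤ ![c1, c2])
    (hprim : ∀ (x : V16) (m : ℤ), m ≠ 0 → m • x ∈ E → x ∈ E)
    (w : V16) (α β : ℤ) (hw : w = α • c1 + β • c2) (hαβ : IsCoprime α β)
    (i0 : Fin 16) (hodd : ¬ (2:ℤ) ∣ bT w (uv i0)) : ∃ z, bT w z = 1 := by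
  set f : V16 →ₗ[ℤ] ℤ :=
    { toFun := fun z => bT w z,
      map_add' := fun p q => bT_add_right w p q,
      map_smul' := fun c p => by show bT w (c • p) = _; rw [bT_smul_right]; simp } with hf
  obtain ⟨d, hd⟩ := (IsPrincipalIdealRing.principal (LinearMap.range f)).principal
  have hdvd : ∀ i, d ∣ bT w (uv i) := by
    intro i
    have hmem : bT w (uv i) ∈ LinearMap.range f := ⟨uv i, rfl⟩
    rw [hd] at hmem
    obtain ⟨a, ha⟩ := Submodule.mem_span_singleton.mp hmem
    exact ⟨a, by rw [← ha]; exact (mul_comm d a) ▸ rfl⟩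
  have hodd_d : ¬ (2:ℤ) ∣ d := fun h2 => hodd (dvd_trans h2 (hdvd i0))
  have h2w : ∀ i, d ∣ 2 * w i := by
    intro i
    have hid : Hmat.mulVec (Tgram.mulVec w) = (2:ℤ) • w := by
      rw [Matrix.mulVec_mulVec, HG_eq, Matrix.smul_mulVec, Matrix.one_mulVec]
    have hcoord : 2 * w i = ∑ j, Hmat i j * (Tgram.mulVec w) j := by
      calc 2 * w i = ((2:ℤ) • w) i := rfl
      _ = (Hmat.mulVec (Tgram.mulVec w)) i := by rw [hid]
      _ = ∑ j, Hmat i j * (Tgram.mulVec w) j := rfl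
    rw [hcoord]
    apply Finset.dvd_sum
    intro j _
    have : d ∣ (Tgram.mulVec w) j := by rw [mulVec_eq_bT, bT_symm]; exact hdvd j
    exact Dvd.dvd.mul_left this _
  have hdw : ∀ i, d ∣ w i := fun i =>
    (coprime_two_of_odd d hodd_d).dvd_of_dvd_mul_left (h2w i)
  have hdne : d ≠ 0 := by
    rintro rfl
    exact hodd (by rw [zero_dvd_iff.mp (hdvd i0)]; exact dvd_zero 2)
  set x : V16 := fun i => w i / d with hx
  have hdx : d • x = w := by funext i; exact Int.mul_ediv_cancel' (hdw i)
  have hwE : w ∈ E := by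
    rw [hw, hspan]
    exact add_mem (Submodule.smul_mem _ _ (Submodule.subset_span (by simp)))
      (Submodule.smul_mem _ _ (Submodule.subset_span (by simp)))
  have hxE : x ∈ E := hprim x d hdne (by rw [hdx]; exact hwE)
  rw [hspan] at hxE
  obtain ⟨γ1, γ2, hγ⟩ := Submodule.mem_span_pair.mp hxE
  have hcomb : (d*γ1) • c1 + (d*γ2) • c2 = α • c1 + β • c2 := by
    rw [← hw, ← hdx, ← hγ, smul_add, smul_smul, smul_smul]
  have heq0 : (α - d*γ1) • c1 + (β - d*γ2) • c2 = 0 := by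
    funext i
    have hi := congrFun hcomb i
    simp only [Pi.add_apply, Pi.smul_apply, smul_eq_mul, Pi.zero_apply] at hi ⊢
    linear_combination -hi
  have huni := pair_unique hli _ _ heq0
  have hdu : IsUnit d := hαβ.isUnit_of_dvd' ⟨γ1, by linarith [huni.1]⟩ ⟨γ2, by linarith [huni.2]⟩
  have h1mem : (1:ℤ) ∈ LinearMap.range f := by
    rw [hd]
    apply Submodule.mem_span_singleton.mpr
    rcases Int.isUnit_iff.mp hdu with rfl | rfl
    · exact ⟨1, by simp⟩
    · exact ⟨-1, by simp [neg_neg]⟩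
  obtain ⟨z, hz⟩ := h1mem
  exact ⟨z, hz⟩

lemma wittZMod : ∀ a1 a2 a3 a4 b1 b2 b3 b4 : ZMod 2,
    a1 + a2 + a1*a2 + a3*a4 = 0 → b1 + b2 + b1*b2 + b3*b4 = 0 →
    (a1+b1) + (a2+b2) + (a1+b1)*(a2+b2) + (a3+b3)*(a4+b4) = 0 →
    (a1 = 0 ∧ a2 = 0 ∧ a3 = 0 ∧ a4 = 0) ∨ (b1 = 0 ∧ b2 = 0 ∧ b3 = 0 ∧ b4 = 0) ∨
    (a1 = b1 ∧ a2 = b2 ∧ a3 = b3 ∧ a4 = b4) := by decide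

lemma wittZ (x2 x4 x14 x15 y2 y4 y14 y15 : ℤ)
    (h1 : (2:ℤ) ∣ (x2 + x4 + x2*x4 + x14*x15))
    (h2 : (2:ℤ) ∣ (y2 + y4 + y2*y4 + y14*y15))
    (h3 : (2:ℤ) ∣ ((x2+y2) + (x4+y4) + (x2+y2)*(x4+y4) + (x14+y14)*(x15+y15))) :
    ((2:ℤ) ∣ x2 ∧ (2:ℤ) ∣ x4 ∧ (2:ℤ) ∣ x14 ∧ (2:ℤ) ∣ x15) ∨
    ((2:ℤ) ∣ y2 ∧ (2:ℤ) ∣ y4 ∧ (2:ℤ) ∣ y14 ∧ (2:ℤ) ∣ y15) ∨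
    ((2:ℤ) ∣ x2 - y2 ∧ (2:ℤ) ∣ x4 - y4 ∧ (2:ℤ) ∣ x14 - y14 ∧ (2:ℤ) ∣ x15 - y15) := by
  have c1 : ((x2 + x4 + x2*x4 + x14*x15 : ℤ) : ZMod 2) = 0 :=
    (ZMod.intCast_zmod_eq_zero_iff_dvd _ 2).mpr h1
  have c2 : ((y2 + y4 + y2*y4 + y14*y15 : ℤ) : ZMod 2) = 0 :=
    (ZMod.intCast_zmod_eq_zero_iff_dvd _ 2).mpr h2
  have c3 : (((x2+y2) + (x4+y4) + (x2+y2)*(x4+y4) + (x14+y14)*(x15+y15) : ℤ) : ZMod 2) = 0 :=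
    (ZMod.intCast_zmod_eq_zero_iff_dvd _ 2).mpr h3
  push_cast at c1 c2 c3
  rcases wittZMod (x2:ZMod 2) (x4:ZMod 2) (x14:ZMod 2) (x15:ZMod 2)
      (y2:ZMod 2) (y4:ZMod 2) (y14:ZMod 2) (y15:ZMod 2) c1 c2 c3 with
    ⟨e1,e2,e3,e4⟩ | ⟨e1,e2,e3,e4⟩ | ⟨e1,e2,e3,e4⟩
  · exact Or.inl ⟨(ZMod.intCast_zmod_eq_zero_iff_dvd _ 2).mp e1,
      (ZMod.intCast_zmod_eq_zero_iff_dvd _ 2).mp e2,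
      (ZMod.intCast_zmod_eq_zero_iff_dvd _ 2).mp e3,
      (ZMod.intCast_zmod_eq_zero_iff_dvd _ 2).mp e4⟩
  · exact Or.inr (Or.inl ⟨(ZMod.intCast_zmod_eq_zero_iff_dvd _ 2).mp e1,
      (ZMod.intCast_zmod_eq_zero_iff_dvd _ 2).mp e2,
      (ZMod.intCast_zmod_eq_zero_iff_dvd _ 2).mp e3,
      (ZMod.intCast_zmod_eq_zero_iff_dvd _ 2).mp e4⟩)
  · refine Or.inr (Or.inr ⟨?_, ?_, ?_, ?_⟩)
    · exact (ZMod.intCast_zmod_eq_zero_iff_dvd _ 2).mp (by push_cast; rw [e1]; ring)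
    · exact (ZMod.intCast_zmod_eq_zero_iff_dvd _ 2).mp (by push_cast; rw [e2]; ring)
    · exact (ZMod.intCast_zmod_eq_zero_iff_dvd _ 2).mp (by push_cast; rw [e3]; ring)
    · exact (ZMod.intCast_zmod_eq_zero_iff_dvd _ 2).mp (by push_cast; rw [e4]; ring)

end PartA
section PartA2

lemma qlemZ (v : V16) (hev : ∀ i, (2:ℤ) ∣ bT v (uv i)) (hiso : bT v v = 0) :
    (2:ℤ) ∣ (v 2 + v 4 + v 2 * v 4 + v 14 * v 15) := by
  have h0 := hev 1; rw [bT_uv1] at h0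
  have h1 := hev 0; rw [bT_uv0] at h1
  have h2 := hev 2; rw [bT_uv2] at h2
  have h3 := hev 3; rw [bT_uv3] at h3
  have hI6 := hev 6; rw [bT_uv6] at hI6
  have hI7 := hev 7; rw [bT_uv7] at hI7
  have hI8 := hev 8; rw [bT_uv8] at hI8
  have hI9 := hev 9; rw [bT_uv9] at hI9
  have hI10 := hev 10; rw [bT_uv10] at hI10
  have hI11 := hev 11; rw [bT_uv11] at hI11
  have hI12 := hev 12; rw [bT_uv12] at hI12
  have hI13 := hev 13; rw [bT_uv13] at hI13
  obtain ⟨a0, ha0⟩ : ∃ a, v 0 = 2*a := by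
    have : (2:ℤ) ∣ v 0 := h0
    obtain ⟨a, ha⟩ := this; exact ⟨a, ha⟩
  obtain ⟨a1, ha1⟩ : ∃ a, v 1 = 2*a := by
    have : (2:ℤ) ∣ v 1 := h1
    obtain ⟨a, ha⟩ := this; exact ⟨a, ha⟩
  obtain ⟨a3, ha3⟩ : ∃ a, v 3 = 2*a := by
    have : (2:ℤ) ∣ v 3 := by omega
    obtain ⟨a, ha⟩ := this; exact ⟨a, ha⟩
  obtain ⟨u, hu⟩ : ∃ u, v 5 = 2*u - v 2 - v 4 := by
    have : (2:ℤ) ∣ v 2 + v 4 + v 5 := by omega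
    obtain ⟨u, hu⟩ := this; exact ⟨u, by omega⟩
  have hE : (2:ℤ) ∣ v 6 ∧ (2:ℤ) ∣ v 7 ∧ (2:ℤ) ∣ v 8 ∧ (2:ℤ) ∣ v 9 ∧ (2:ℤ) ∣ v 10 ∧
      (2:ℤ) ∣ v 11 ∧ (2:ℤ) ∣ v 12 ∧ (2:ℤ) ∣ v 13 := by omega
  obtain ⟨⟨s6, hs6⟩, ⟨s7, hs7⟩, ⟨s8, hs8⟩, ⟨s9, hs9⟩, ⟨s10, hs10⟩, ⟨s11, hs11⟩,
    ⟨s12, hs12⟩, ⟨s13, hs13⟩⟩ := hE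
  rw [bT_expand] at hiso
  rw [ha0, ha1, ha3, hu, hs6, hs7, hs8, hs9, hs10, hs11, hs12, hs13] at hiso
  obtain ⟨k2, hk2⟩ : ∃ k, v 2 * v 2 - v 2 = 2*k := by
    obtain ⟨k, hk⟩ := Int.even_mul_succ_self (v 2 - 1)
    exact ⟨k, by linear_combination hk⟩
  obtain ⟨k4, hk4⟩ : ∃ k, v 4 * v 4 - v 4 = 2*k := by
    obtain ⟨k, hk⟩ := Int.even_mul_succ_self (v 4 - 1)
    exact ⟨k, by linear_combination hk⟩
  have h4 : (4:ℤ) * (v 2^2 + v 4^2 + v 2*v 4 - v 14*v 15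
      - 2*((1)*a0*a1 + (-1)*a3*a3 + (1)*a3*u + (-1)*s10*s10 + (1)*s10*s11 + (1)*s10*s6 + (-1)*s11*s11 + (1)*s11*s12 + (-1)*s12*s12 + (1)*s12*s13 + (-1)*s13*s13 + (-1)*s6*s6 + (1)*s6*s7 + (1)*s6*s8 + (-1)*s7*s7 + (-1)*s8*s8 + (1)*s8*s9 + (-1)*s9*s9 + (-1)*u*u + (1)*u*(v 2) + (1)*u*(v 4))) = 0 := by linear_combination -hiso
  have hQR : v 2^2 + v 4^2 + v 2*v 4 - v 14*v 15 - 2*((1)*a0*a1 + (-1)*a3*a3 + (1)*a3*u + (-1)*s10*s10 + (1)*s10*s11 + (1)*s10*s6 + (-1)*s11*s11 + (1)*s11*s12 + (-1)*s12*s12 + (1)*s12*s13 + (-1)*s13*s13 + (-1)*s6*s6 + (1)*s6*s7 + (1)*s6*s8 + (-1)*s7*s7 + (-1)*s8*s8 + (1)*s8*s9 + (-1)*s9*s9 + (-1)*u*u + (1)*u*(v 2) + (1)*u*(v 4)) = 0 := by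
    rcases mul_eq_zero.mp h4 with hc | hc
    · norm_num at hc
    · exact hc
  exact ⟨((1)*a0*a1 + (-1)*a3*a3 + (1)*a3*u + (-1)*s10*s10 + (1)*s10*s11 + (1)*s10*s6 + (-1)*s11*s11 + (1)*s11*s12 + (-1)*s12*s12 + (1)*s12*s13 + (-1)*s13*s13 + (-1)*s6*s6 + (1)*s6*s7 + (1)*s6*s8 + (-1)*s7*s7 + (-1)*s8*s8 + (1)*s8*s9 + (-1)*s9*s9 + (-1)*u*u + (1)*u*(v 2) + (1)*u*(v 4)) - k2 - k4 + v 14 * v 15, by linear_combination hQR - hk2 - hk4⟩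

end PartA2
section PartA3

lemma allEven (v : V16) (hev : ∀ i, (2:ℤ) ∣ bT v (uv i)) (h2 : (2:ℤ) ∣ v 2)
    (h4 : (2:ℤ) ∣ v 4) (h14 : (2:ℤ) ∣ v 14) (h15 : (2:ℤ) ∣ v 15) : ∀ i, (2:ℤ) ∣ v i := by
  have e0 := hev 1; rw [bT_uv1] at e0
  have e1 := hev 0; rw [bT_uv0] at e1
  have e3 := hev 2; rw [bT_uv2] at e3
  have e5 := hev 3; rw [bT_uv3] at e5
  have e6 := hev 6; rw [bT_uv6] at e6
  have e7 := hev 7; rw [bT_uv7] at e7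
  have e8 := hev 8; rw [bT_uv8] at e8
  have e9 := hev 9; rw [bT_uv9] at e9
  have e10 := hev 10; rw [bT_uv10] at e10
  have e11 := hev 11; rw [bT_uv11] at e11
  have e12 := hev 12; rw [bT_uv12] at e12
  have e13 := hev 13; rw [bT_uv13] at e13
  have hall : (2:ℤ) ∣ v 0 ∧ (2:ℤ) ∣ v 1 ∧ (2:ℤ) ∣ v 3 ∧ (2:ℤ) ∣ v 5 ∧ (2:ℤ) ∣ v 6 ∧
      (2:ℤ) ∣ v 7 ∧ (2:ℤ) ∣ v 8 ∧ (2:ℤ) ∣ v 9 ∧ (2:ℤ) ∣ v 10 ∧ (2:ℤ) ∣ v 11 ∧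
      (2:ℤ) ∣ v 12 ∧ (2:ℤ) ∣ v 13 := by omega
  obtain ⟨g0,g1,g3,g5,g6,g7,g8,g9,g10,g11,g12,g13⟩ := hall
  intro i
  rcases i with ⟨iv, hi⟩
  interval_cases iv
  · exact g0
  · exact g1
  · exact h2
  · exact g3
  · exact h4
  · exact g5
  · exact g6
  · exact g7
  · exact g8
  · exact g9
  · exact g10
  · exact g11
  · exact g12
  · exact g13
  · exact h14
  · exact h15

lemma contra_half (E : Submodule ℤ V16) (c1 c2 w : V16) (α β : ℤ)
    (hspan : E = Submodule.span ℤ {c1, c2}) (hli : LinearIndependent ℤ ![c1, c2])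
    (hprim : ∀ (x : V16) (m : ℤ), m ≠ 0 → m • x ∈ E → x ∈ E)
    (hw : w = α • c1 + β • c2) (hev : ∀ i, (2:ℤ) ∣ w i)
    (hodd : ¬ ((2:ℤ) ∣ α ∧ (2:ℤ) ∣ β)) : False := by
  set x : V16 := fun i => w i / 2 with hx
  have hdx : (2:ℤ) • x = w := by funext i; exact Int.mul_ediv_cancel' (hev i)
  have hwE : w ∈ E := by
    rw [hw, hspan]
    exact add_mem (Submodule.smul_mem _ _ (Submodule.subset_span (by simp)))
      (Submodule.smul_mem _ _ (Submodule.subset_span (by simp)))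
  have hxE : x ∈ E := hprim x 2 two_ne_zero (by rw [hdx]; exact hwE)
  rw [hspan] at hxE
  obtain ⟨γ1, γ2, hγ⟩ := Submodule.mem_span_pair.mp hxE
  have hcomb : ((2:ℤ)*γ1) • c1 + ((2:ℤ)*γ2) • c2 = α • c1 + β • c2 := by
    rw [← hw, ← hdx, ← hγ, smul_add, smul_smul, smul_smul]
  have heq0 : (α - 2*γ1) • c1 + (β - 2*γ2) • c2 = 0 := by
    funext i
    have hi := congrFun hcomb i
    simp only [Pi.add_apply, Pi.smul_apply, smul_eq_mul, Pi.zero_apply] at hi ⊢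
    linear_combination -hi
  have huni := pair_unique hli _ _ heq0
  exact hodd ⟨⟨γ1, by linarith [huni.1]⟩, ⟨γ2, by linarith [huni.2]⟩⟩

lemma partA (E : Submodule ℤ V16) (c1 c2 : V16)
    (hspan : E = Submodule.span ℤ {c1, c2}) (hli : LinearIndependent ℤ ![c1, c2])
    (hprim : ∀ (x : V16) (m : ℤ), m ≠ 0 → m • x ∈ E → x ∈ E)
    (hiso : ∀ x ∈ E, ∀ y ∈ E, bT x y = 0) :
    ∃ b1 b2 : V16, E = Submodule.span ℤ {b1, b2} ∧ LinearIndependent ℤ ![b1, b2] ∧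
      (∃ z, bT b1 z = 1) := by
  have hc1E : c1 ∈ E := by rw [hspan]; exact Submodule.subset_span (by simp)
  have hc2E : c2 ∈ E := by rw [hspan]; exact Submodule.subset_span (by simp)
  by_cases h1 : ∃ i, ¬ (2:ℤ) ∣ bT c1 (uv i)
  · obtain ⟨i0, hi0⟩ := h1
    exact ⟨c1, c2, hspan, hli,
      divOne E c1 c2 hspan hli hprim c1 1 0 (by simp) isCoprime_one_left i0 hi0⟩
  by_cases h2 : ∃ i, ¬ (2:ℤ) ∣ bT c2 (uv i)
  · obtain ⟨i0, hi0⟩ := h2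
    refine ⟨c2, c1, by rw [hspan, Set.pair_comm], ?_, ?_⟩
    · apply li_pair
      intro s t hst
      have := pair_unique hli t s (by rw [add_comm] at hst; exact hst)
      exact ⟨this.2, this.1⟩
    · exact divOne E c1 c2 hspan hli hprim c2 0 1 (by simp)
        (isCoprime_zero_left.mpr isUnit_one) i0 hi0
  · push_neg at h1 h2
    exfalso
    have q1 := qlemZ c1 h1 (hiso c1 hc1E c1 hc1E)
    have q2 := qlemZ c2 h2 (hiso c2 hc2E c2 hc2E)
    have h12 : ∀ i, (2:ℤ) ∣ bT (c1 + c2) (uv i) := fun i => by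
      rw [bT_add_left]; exact dvd_add (h1 i) (h2 i)
    have q12 := qlemZ (c1 + c2) h12
      (hiso _ (add_mem hc1E hc2E) _ (add_mem hc1E hc2E))
    have q12' : (2:ℤ) ∣ ((c1 2 + c2 2) + (c1 4 + c2 4) + (c1 2 + c2 2)*(c1 4 + c2 4)
        + (c1 14 + c2 14)*(c1 15 + c2 15)) := by
      simpa using q12
    rcases wittZ (c1 2) (c1 4) (c1 14) (c1 15) (c2 2) (c2 4) (c2 14) (c2 15) q1 q2 q12' with
      ⟨e2, e4, e14, e15⟩ | ⟨e2, e4, e14, e15⟩ | ⟨e2, e4, e14, e15⟩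
    · exact contra_half E c1 c2 c1 1 0 hspan hli hprim (by simp) (allEven c1 h1 e2 e4 e14 e15)
        (by intro ⟨ha, _⟩; omega)
    · exact contra_half E c1 c2 c2 0 1 hspan hli hprim (by simp) (allEven c2 h2 e2 e4 e14 e15)
        (by intro ⟨_, hb⟩; omega)
    · refine contra_half E c1 c2 (c1 - c2) 1 (-1) hspan hli hprim (by funext i; simp; ring) ?_
        (by intro ⟨ha, _⟩; omega)
      have hev12 : ∀ i, (2:ℤ) ∣ bT (c1 - c2) (uv i) := fun i => by
        rw [bT_sub_left]; exact dvd_sub (h1 i) (h2 i)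
      have hs : ∀ k : Fin 16, (c1 - c2) k = c1 k - c2 k := fun k => rfl
      exact allEven (c1 - c2) hev12 (by rw [hs]; exact e2) (by rw [hs]; exact e4)
        (by rw [hs]; exact e14) (by rw [hs]; exact e15)

end PartA3
section Final

lemma span_pair_sub (x y : V16) (c : ℤ) :
    Submodule.span ℤ ({x, y - c • x} : Set V16) = Submodule.span ℤ ({x, y} : Set V16) := by
  apply le_antisymm
  · rw [Submodule.span_le]
    rintro z (rfl | rfl)
    · exact Submodule.subset_span (by simp)
    · exact sub_mem (Submodule.subset_span (by simp))
        (Submodule.smul_mem _ _ (Submodule.subset_span (by simp)))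
  · rw [Submodule.span_le]
    rintro z (rfl | rfl)
    · exact Submodule.subset_span (by simp)
    · rw [show z = (z - c • x) + c • x from (sub_add_cancel z (c • x)).symm]
      exact add_mem (Submodule.subset_span (by simp))
        (Submodule.smul_mem _ _ (Submodule.subset_span (by simp)))

lemma span_pair_neg (x y : V16) :
    Submodule.span ℤ ({-x, y} : Set V16) = Submodule.span ℤ ({x, y} : Set V16) := by
  apply le_antisymm
  · rw [Submodule.span_le]
    rintro z (rfl | rfl)
    · exact neg_mem (Submodule.subset_span (by simp))
    · exact Submodule.subset_span (by simp)
  · rw [Submodule.span_le]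
    rintro z (rfl | rfl)
    · rw [show z = -(-z) from (neg_neg z).symm]
      exact neg_mem (Submodule.subset_span (by simp))
    · exact Submodule.subset_span (by simp)

lemma final_core (E : Submodule ℤ V16) (b1 b2 : V16)
    (hspan : E = Submodule.span ℤ {b1, b2}) (hli : LinearIndependent ℤ ![b1, b2])
    (hiso : ∀ x ∈ E, ∀ y ∈ E, bT x y = 0)
    (φ : V16 ≃ₗ[ℤ] V16) (hφiso : ∀ x y, bT (φ x) (φ y) = bT x y)
    (hφ1 : φ b1 = uv 0) :
    ∃ (b₁ b₂ : V16) (ψ : V16 ≃ₗ[ℤ] V16),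
      E = Submodule.span ℤ {b₁, b₂} ∧ LinearIndependent ℤ ![b₁, b₂] ∧
      (∀ x y : V16, bT (ψ x) (ψ y) = bT x y) ∧
      (∀ i : Fin 16, 2 ≤ (i : ℕ) → ψ b₁ i = 0) ∧
      (∀ i : Fin 16, (i : ℕ) < 2 → ψ b₂ i = 0) := by
  have hb1E : b1 ∈ E := by rw [hspan]; exact Submodule.subset_span (by simp)
  have hb2E : b2 ∈ E := by rw [hspan]; exact Submodule.subset_span (by simp)
  refine ⟨b1, b2 - ((φ b2) 0) • b1, φ, by rw [hspan, span_pair_sub], ?_, hφiso, ?_, ?_⟩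
  · apply li_pair
    intro s t hst
    have h0 : (s - t*((φ b2) 0)) • b1 + t • b2 = 0 := by
      funext i
      have hi := congrFun hst i
      simp only [Pi.add_apply, Pi.smul_apply, Pi.sub_apply, smul_eq_mul, Pi.zero_apply] at hi ⊢
      linear_combination hi
    have huni := pair_unique hli _ _ h0
    refine ⟨?_, huni.2⟩
    have h1 := huni.1
    have h2 := huni.2
    linear_combination h1 + ((φ b2) 0) * h2
  · intro i hi
    rw [hφ1]
    refine uv_ne ?_
    intro he
    subst he
    exact absurd hi (by decide)
  · intro i hi
    have hmap : φ (b2 - ((φ b2) 0) • b1) = φ b2 - ((φ b2) 0) • uv 0 := by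
      rw [map_sub, φ.map_smul, hφ1]
    have h1 : (φ b2) 1 = 0 := by
      have hq := hφiso b1 b2
      rw [hφ1, hiso b1 hb1E b2 hb2E] at hq
      rwa [bT_symm, bT_uv0] at hq
    rw [hmap]
    rcases i with ⟨iv, hlt⟩
    interval_cases iv
    · show (φ b2) 0 - ((φ b2) 0) * uv 0 0 = 0
      rw [show ((uv 0) 0 : ℤ) = 1 from rfl]; ring
    · show (φ b2) 1 - ((φ b2) 0) * uv 0 1 = 0
      rw [show ((uv 0) 1 : ℤ) = 0 from rfl, h1]; ring

end Final

/-- For any rank `2` primitive isotropic sublattice `E` of `T ≅ U ⊕ N`,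
there is a basis `{b₁, b₂}` of `E` and a self-isometry `φ` of `T = U ⊕ N`
such that `φ(b₁)` lies in the `U` summand (the first two coordinates) and
`φ(b₂)` lies in the `N` summand (the last fourteen coordinates). -/
theorem isotropic_rank_two_adapted_to_splitting
    (E : Submodule ℤ (Fin 16 → ℤ))
    (hrank : ∃ c₁ c₂ : Fin 16 → ℤ,
      E = Submodule.span ℤ {c₁, c₂} ∧ LinearIndependent ℤ ![c₁, c₂])
    (hprim : ∀ (x : Fin 16 → ℤ) (m : ℤ), m ≠ 0 → m • x ∈ E → x ∈ E)
    (hiso : ∀ x ∈ E, ∀ y ∈ E, bT x y = 0) :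
    ∃ (b₁ b₂ : Fin 16 → ℤ) (φ : (Fin 16 → ℤ) ≃ₗ[ℤ] (Fin 16 → ℤ)),
      E = Submodule.span ℤ {b₁, b₂} ∧ LinearIndependent ℤ ![b₁, b₂] ∧
      (∀ x y : Fin 16 → ℤ, bT (φ x) (φ y) = bT x y) ∧
      (∀ i : Fin 16, 2 ≤ (i : ℕ) → φ b₁ i = 0) ∧
      (∀ i : Fin 16, (i : ℕ) < 2 → φ b₂ i = 0) := by
  obtain ⟨c1, c2, hspan, hli⟩ := hrank
  obtain ⟨b1, b2, hspan2, hli2, hdiv⟩ := partA E c1 c2 hspan hli hprim hiso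
  have hb1E : b1 ∈ E := by rw [hspan2]; exact Submodule.subset_span (by simp)
  obtain ⟨φ, hφiso, hφv⟩ := partB b1 (hiso b1 hb1E b1 hb1E) hdiv
  rcases hφv with h | h
  · exact final_core E b1 b2 hspan2 hli2 hiso φ hφiso h
  · refine final_core E (-b1) b2 ?_ ?_ hiso φ hφiso ?_
    · rw [hspan2, span_pair_neg]
    · apply li_pair
      intro s t hst
      have h0 : (-s) • b1 + t • b2 = 0 := by
        funext i
        have hi := congrFun hst i
        simp only [Pi.add_apply, Pi.smul_apply, Pi.neg_apply, smul_eq_mul, Pi.zero_apply] at hi ⊢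
        linear_combination hi
      have huni := pair_unique hli2 _ _ h0
      exact ⟨by linarith [huni.1], huni.2⟩
    · rw [map_neg, h, neg_neg]
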